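/- arXiv:2003.14070 — 7 statements merged into one kernel-verified Lean document; each statement's English description precedes it below -/
import Mathlib

section
/- For every positive integer n, the sum over divisors d of n of μ(n/d)·(n/d)·φ(d) equals μ(n), where μ is the Möbius function and φ is Euler's totient function. -/
/-! The sum is the Dirichlet convolution `(μ · id) * φ`. Because `id` is completely multiplicative,
its Dirichlet inverse is the pointwise product `μ · id`, and `φ = μ * id` by Möbius inversion of
`∑_{d ∣ n} φ d = n`; hence `(μ · id) * φ = μ * ((μ · id) * id) = μ`. -/

namespace ArithmeticFunction

open scoped ArithmeticFunction.zeta ArithmeticFunction.Moebius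

theorem pmul_moebius_mul_self_eq_one {R : Type*} [CommRing R] {f : ArithmeticFunction R}
    (hf : ∀ a b, f (a * b) = f a * f b) (hf1 : f 1 = 1) :
    pmul (μ : ArithmeticFunction R) f * f = 1 := by
  ext n
  calc (pmul (μ : ArithmeticFunction R) f * f) n
      = ∑ x ∈ n.divisorsAntidiagonal, (μ x.1 : R) * f n := by
        rw [mul_apply]
        refine Finset.sum_congr rfl fun x hx => ?_
        rw [pmul_apply, intCoe_apply, mul_assoc, ← hf, (Nat.mem_divisorsAntidiagonal.1 hx).1]
    _ = (μ * ζ : ArithmeticFunction R) n * f n := by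
        rw [← Finset.sum_mul, coe_mul_zeta_apply, Nat.sum_divisorsAntidiagonal (fun a _ => (μ a : R))]
        simp only [intCoe_apply]
    _ = (1 : ArithmeticFunction R) n := by
        rw [coe_moebius_mul_coe_zeta]
        rcases eq_or_ne n 1 with rfl | hn
        · simp [hf1]
        · simp [one_apply_ne hn]

def totient : ArithmeticFunction ℕ := ⟨Nat.totient, Nat.totient_zero⟩

@[simp]
theorem totient_apply (n : ℕ) : totient n = n.totient := rfl

theorem zeta_mul_totient : ζ * totient = ArithmeticFunction.id := by
  ext n
  rw [zeta_mul_apply]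
  exact Nat.sum_totient n

theorem moebius_mul_id_eq_totient :
    (μ : ArithmeticFunction ℤ) * (ArithmeticFunction.id : ArithmeticFunction ℕ) = totient := by
  rw [← zeta_mul_totient, natCoe_mul, ← mul_assoc, moebius_mul_coe_zeta, one_mul]

theorem pmul_moebius_id_mul_totient :
    pmul (μ : ArithmeticFunction ℤ) (ArithmeticFunction.id : ArithmeticFunction ℕ) * totient = μ := by
  have hid := pmul_moebius_mul_self_eq_one
    (f := ((ArithmeticFunction.id : ArithmeticFunction ℕ) : ArithmeticFunction ℤ)) (by simp) (by simp)
  rw [intCoe_int] at hid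
  rw [← moebius_mul_id_eq_totient, mul_left_comm, hid, mul_one]

end ArithmeticFunction

theorem moebius_totient_convolution_general (n : ℕ) :
    ∑ d ∈ n.divisors,
        (ArithmeticFunction.moebius (n / d)) * ((n / d : ℕ) : ℤ) * (Nat.totient d : ℤ)
      = ArithmeticFunction.moebius n := by
  rw [← Nat.sum_divisorsAntidiagonal' (fun a b => ArithmeticFunction.moebius a * a * b.totient)]
  conv_rhs => rw [← ArithmeticFunction.pmul_moebius_id_mul_totient, ArithmeticFunction.mul_apply]
  simp

theorem moebius_totient_convolution (n : ℕ) (hn : 0 < n) :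
    ∑ d ∈ n.divisors,
        (ArithmeticFunction.moebius (n / d)) * ((n / d : ℕ) : ℤ) * (Nat.totient d : ℤ)
      = ArithmeticFunction.moebius n :=
  moebius_totient_convolution_general n
end

section
/- For every even positive integer n, the sum over odd divisors d of n of μ(n/d)·(n/d)·φ(d) equals 2·μ(n). -/
/-!
In the Dirichlet ring, `d ↦ μ(d) d` is the inverse of `id` and `φ = μ * id`, so
`(μ · id) * φ = μ * ((μ · id) * id) = μ`: the sum over all divisors is `μ(n)`.
For a prime `p ∣ n`, write `n = p^a m` with `p ∤ m`, `a ≥ 1`. The divisors of `n` prime to `p` are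
those of `m`, and `n / d = p^a (m / d)` with coprime factors, so the restricted sum is
`μ(p^a) p^a μ(m)`. Since `μ(p^a) p^a = p μ(p^a)` (both vanish for `a ≥ 2`), this is `p μ(n)`.
-/

open Finset
open scoped ArithmeticFunction.Moebius ArithmeticFunction.zeta Nat

theorem Nat.filter_not_dvd_divisors_eq_divisors_ordCompl {p n : ℕ} (hp : p.Prime) :
    {d ∈ n.divisors | ¬p ∣ d} = (ordCompl[p] n).divisors := by
  rcases eq_or_ne n 0 with rfl | hn
  · simp
  ext d
  simp only [mem_filter, Nat.mem_divisors, (Nat.ordCompl_pos p hn).ne', hn, ne_eq,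
    not_false_eq_true, and_true]
  refine ⟨fun ⟨hdn, hpd⟩ ↦ Nat.dvd_ordCompl_of_dvd_not_dvd hdn hpd, fun hd ↦ ?_⟩
  exact ⟨hd.trans (Nat.ordCompl_dvd n p), fun hpd ↦ Nat.not_dvd_ordCompl hp hn (hpd.trans hd)⟩

namespace ArithmeticFunction

theorem coe_moebius_mul_coe_id_apply (n : ℕ) :
    ((μ : ArithmeticFunction ℤ) * (ArithmeticFunction.id : ArithmeticFunction ℕ)) n = φ n := by
  rcases n.eq_zero_or_pos with rfl | hn
  · simp
  rw [mul_apply, ← sum_eq_iff_sum_mul_moebius_eq (f := fun m ↦ (φ m : ℤ)) (g := fun m ↦ (m : ℤ))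
    |>.mp (fun m _ ↦ by exact_mod_cast Nat.sum_totient m) n hn]
  simp

theorem pmul_moebius_id_mul_id :
    ((μ : ArithmeticFunction ℤ).pmul (ArithmeticFunction.id : ArithmeticFunction ℕ)) *
      (ArithmeticFunction.id : ArithmeticFunction ℕ) = 1 := by
  ext n
  calc _ = (n : ℤ) * (μ * ζ) n := by
          rw [mul_apply, mul_apply, mul_sum]
          refine sum_congr rfl fun x hx ↦ ?_
          obtain ⟨rfl, hn⟩ := Nat.mem_divisorsAntidiagonal.mp hx
          simp only [pmul_apply, natCoe_apply, id_apply, Nat.cast_mul, zeta_apply,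
            right_ne_zero_of_mul hn, if_false, Nat.cast_one, mul_one]
          ring
    _ = (1 : ArithmeticFunction ℤ) n := by
          rw [moebius_mul_coe_zeta, one_apply]
          split_ifs with h <;> simp [h]

theorem sum_divisors_moebius_div_mul_div_mul_totient (n : ℕ) :
    ∑ d ∈ n.divisors, μ (n / d) * ((n / d : ℕ) : ℤ) * φ d = μ n := by
  let ι : ArithmeticFunction ℤ := (ArithmeticFunction.id : ArithmeticFunction ℕ)
  let μι : ArithmeticFunction ℤ := (μ : ArithmeticFunction ℤ).pmul ι
  calc _ = (μι * (μ * ι)) n := by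
          rw [mul_apply, Nat.sum_divisorsAntidiagonal' (fun a b ↦ μι a * (μ * ι) b)]
          simp only [μι, ι, pmul_apply, natCoe_apply, id_apply, coe_moebius_mul_coe_id_apply]
    _ = (μ * (μι * ι)) n := by rw [mul_left_comm]
    _ = μ n := by rw [pmul_moebius_id_mul_id, mul_one]

theorem moebius_prime_pow_mul_self {p a : ℕ} (hp : p.Prime) (ha : a ≠ 0) :
    μ (p ^ a) * ((p ^ a : ℕ) : ℤ) = p * μ (p ^ a) := by
  rcases eq_or_ne a 1 with rfl | ha1
  · simp [mul_comm]
  · simp [moebius_apply_prime_pow hp ha, ha1]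

theorem sum_divisors_filter_not_dvd_moebius_div_mul_div_mul_totient {p n : ℕ} (hp : p.Prime)
    (hpn : p ∣ n) :
    ∑ d ∈ n.divisors with ¬p ∣ d, μ (n / d) * ((n / d : ℕ) : ℤ) * φ d = p * μ n := by
  rcases eq_or_ne n 0 with rfl | hn
  · simp
  set a := n.factorization p
  set m := ordCompl[p] n
  have hn_eq : n = p ^ a * m := (Nat.ordProj_mul_ordCompl_eq_self n p).symm
  have hcop : ∀ k, k ∣ m → Nat.Coprime (p ^ a) k := fun k hk ↦
    ((Nat.coprime_ordCompl hp hn).coprime_dvd_right hk).pow_left a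
  have hterm : ∀ d ∈ m.divisors, μ (n / d) * ((n / d : ℕ) : ℤ) * φ d =
      μ (p ^ a) * ((p ^ a : ℕ) : ℤ) * (μ (m / d) * ((m / d : ℕ) : ℤ) * φ d) := by
    intro d hd
    have hdm := Nat.dvd_of_mem_divisors hd
    rw [hn_eq, Nat.mul_div_assoc _ hdm,
      isMultiplicative_moebius.map_mul_of_coprime (hcop _ (Nat.div_dvd_of_dvd hdm))]
    push_cast
    ring
  rw [Nat.filter_not_dvd_divisors_eq_divisors_ordCompl hp, sum_congr rfl hterm, ← mul_sum,
    sum_divisors_moebius_div_mul_div_mul_totient,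
    moebius_prime_pow_mul_self hp (hp.factorization_pos_of_dvd hn hpn).ne', mul_assoc,
    ← isMultiplicative_moebius.map_mul_of_coprime (hcop m dvd_rfl), ← hn_eq]

end ArithmeticFunction

theorem moebius_totient_convolution_odd_divisors_general (n : ℕ) (hne : Even n) :
    ∑ d ∈ n.divisors.filter (fun d => Odd d),
        (ArithmeticFunction.moebius (n / d)) * ((n / d : ℕ) : ℤ) * (Nat.totient d : ℤ)
      = 2 * ArithmeticFunction.moebius n := by
  simp_rw [← Nat.not_even_iff_odd, even_iff_two_dvd]
  exact_mod_cast ArithmeticFunction.sum_divisors_filter_not_dvd_moebius_div_mul_div_mul_totient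
    Nat.prime_two hne.two_dvd

theorem moebius_totient_convolution_odd_divisors (n : ℕ) (hn : 0 < n) (hne : Even n) :
    ∑ d ∈ n.divisors.filter (fun d => Odd d),
        (ArithmeticFunction.moebius (n / d)) * ((n / d : ℕ) : ℤ) * (Nat.totient d : ℤ)
      = 2 * ArithmeticFunction.moebius n :=
  moebius_totient_convolution_odd_divisors_general n hne
end

section
/- For any reflection sr^l in the dihedral group acting on words of length n over a k-letter alphabet, the number of fixed words is k^{n/2} if n is even and l is odd, k^{n/2+1} if n and l are both even, and k^{(n+1)/2} if n is odd. Summing over all n reflections gives n·((k+1)/2)·k^{n/2} fixed words when n is even and n·k^{(n+1)/2} when n is odd. -/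
/-!
A word is fixed by an involution `σ` of the positions iff it is constant on the orbits of
`{id, σ}`, so there are `k ^ #orbits` such words; counting the points of each orbit, with fixed
points counted twice, gives `2 * #orbits = n + #(fixed points)`. For `σ i = l - i` on `ℤ/n`
the fixed points are the solutions of `2 i = l`: one if `n` is odd, and two or none if `n` is
even, according to the parity of `l`.
-/

open Finset
open Fin.NatCast

namespace Function.Involutive

variable {α : Type*} {σ : α → α}

def orbitSetoid (hσ : Involutive σ) : Setoid α where
  r i j := j = i ∨ j = σ i
  iseqv := by
    refine ⟨fun _ => Or.inl rfl, ?_, ?_⟩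
    · rintro i j (rfl | rfl)
      · exact Or.inl rfl
      · exact Or.inr (hσ i).symm
    · rintro i j m (rfl | rfl) (rfl | rfl)
      · exact Or.inl rfl
      · exact Or.inr rfl
      · exact Or.inr rfl
      · exact Or.inl (hσ i)

theorem orbitSetoid_r_iff (hσ : Involutive σ) {i j : α} :
    (orbitSetoid hσ).r i j ↔ j = i ∨ j = σ i := Iff.rfl

def invariantEquiv (hσ : Involutive σ) (β : Type*) :
    {w : α → β // ∀ i, w i = w (σ i)} ≃ (Quotient (orbitSetoid hσ) → β) where
  toFun w := Quotient.lift w.1 fun i j hij => by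
    rcases hij with rfl | rfl
    · rfl
    · exact w.2 i
  invFun f := ⟨fun i => f ⟦i⟧, fun _ => congrArg f (Quotient.sound (Or.inr rfl))⟩
  left_inv _ := rfl
  right_inv f := funext fun q => Quotient.inductionOn q fun _ => rfl

theorem card_invariant [Finite α] (hσ : Involutive σ) (β : Type*) :
    Nat.card {w : α → β // ∀ i, w i = w (σ i)} =
      Nat.card β ^ Nat.card (Quotient (orbitSetoid hσ)) := by
  rw [Nat.card_congr (invariantEquiv hσ β), Nat.card_fun]

theorem two_mul_card_quotient [Finite α] (hσ : Involutive σ) :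
    2 * Nat.card (Quotient (orbitSetoid hσ)) = Nat.card α + Nat.card {i // σ i = i} := by
  classical
  have := Fintype.ofFinite α
  let π := Quotient.mk (orbitSetoid hσ)
  have fiber (j : α) : ({i | π i = π j} : Finset α) = {j, σ j} := by
    ext i
    simp only [mem_filter, mem_univ, true_and, mem_insert, mem_singleton, π, Quotient.eq,
      orbitSetoid_r_iff]
    constructor
    · rintro (rfl | rfl)
      · exact Or.inl rfl
      · exact Or.inr (hσ i).symm
    · rintro (rfl | rfl)
      · exact Or.inl rfl
      · exact Or.inr (hσ j).symm
  have weight_fiber (q : Quotient (orbitSetoid hσ)) :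
      ∑ i with π i = q, (if σ i = i then 2 else 1) = 2 := by
    induction q using Quotient.inductionOn with | h j => ?_
    rw [fiber j]
    by_cases hj : σ j = j
    · simp [hj]
    · rw [sum_pair (Ne.symm hj), if_neg hj, if_neg (by rw [hσ j]; exact Ne.symm hj)]
  calc 2 * Nat.card (Quotient (orbitSetoid hσ))
      = ∑ q, ∑ i with π i = q, (if σ i = i then 2 else 1) := by
        simp [weight_fiber, mul_comm]
    _ = ∑ i, (1 + if σ i = i then 1 else 0) := by
        rw [sum_fiberwise]; exact sum_congr rfl fun i _ => by split_ifs <;> rfl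
    _ = Nat.card α + Nat.card {i // σ i = i} := by
        rw [sum_add_distrib, sum_boole]; simp [Fintype.card_subtype]

end Function.Involutive

namespace Fin

variable {n : ℕ} [NeZero n]

theorem sub_eq_self_iff (l i : Fin n) :
    l - i = i ↔ i.val + i.val = l.val ∨ i.val + i.val = n + l.val := by
  rw [sub_eq_iff_eq_add, Fin.ext_iff, Fin.val_add_eq_ite]
  have := l.isLt
  split_ifs <;> omega

theorem card_fixedPoints_sub (l : Fin n) :
    Nat.card {i : Fin n // l - i = i} =
      if Even n then (if Even l.val then 2 else 0) else 1 := by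
  have hl := l.isLt
  have card_eq (S : Finset (Fin n))
      (hS : ∀ i : Fin n, i.val + i.val = l.val ∨ i.val + i.val = n + l.val ↔ i ∈ S) :
      Nat.card {i : Fin n // l - i = i} = #S := by
    rw [Nat.card_eq_fintype_card]
    exact Fintype.card_of_subtype S fun i => ((sub_eq_self_iff l i).trans (hS i)).symm
  rcases Nat.even_or_odd' n with ⟨m, rfl | rfl⟩ <;>
    rcases Nat.even_or_odd' l.val with ⟨b, hb | hb⟩
  · rw [card_eq {⟨b, by omega⟩, ⟨b + m, by omega⟩},
      card_pair (by simp only [ne_eq, Fin.ext_iff]; omega), if_pos (even_two_mul m), if_pos (hb ▸ even_two_mul b)]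
    intro i; simp only [mem_insert, mem_singleton, Fin.ext_iff]; omega
  · rw [card_eq ∅, if_pos (even_two_mul m), if_neg (by rw [hb]; simp), card_empty]
    intro i; simp only [notMem_empty, iff_false]; omega
  · rw [card_eq {⟨b, by omega⟩}, card_singleton, if_neg (by simp)]
    intro i; simp only [mem_singleton, Fin.ext_iff]; omega
  · rw [card_eq {⟨b + m + 1, by omega⟩}, card_singleton, if_neg (by simp)]
    intro i; simp only [mem_singleton, Fin.ext_iff]; omega

end Fin

theorem Finset.sum_range_two_mul_ite_even {M : Type*} [AddCommMonoid M] (m : ℕ) (a b : M) :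
    ∑ l ∈ range (2 * m), (if Even l then a else b) = m • (a + b) := by
  induction m with
  | zero => simp
  | succ m ih =>
    rw [show 2 * (m + 1) = 2 * m + 1 + 1 by ring, sum_range_succ, sum_range_succ, ih,
      if_pos (even_two_mul m), if_neg (by simp [parity_simps]), succ_nsmul, add_assoc]

theorem card_reflection_fixed_words (n k : ℕ) [NeZero n] (l : Fin n) :
    Nat.card {w : Fin n → Fin k // ∀ i : Fin n, w i = w (l - i)} =
      if Even n then (if Even l.val then k ^ (n / 2 + 1) else k ^ (n / 2))
      else k ^ ((n + 1) / 2) := by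
  have hσ : Function.Involutive (fun i : Fin n => l - i) := sub_sub_cancel l
  have horbits := hσ.two_mul_card_quotient
  rw [Nat.card_fin, Fin.card_fixedPoints_sub] at horbits
  rw [hσ.card_invariant, Nat.card_fin]
  rcases Nat.even_or_odd' n with ⟨m, rfl | rfl⟩
  · split_ifs at horbits ⊢ <;> congr 1 <;> omega
  · simp only [if_neg (Nat.not_even_two_mul_add_one m)] at horbits ⊢
    congr 1; omega

theorem reflection_fixed_words (n k : ℕ) [NeZero n] :
    (∀ l : Fin n,
      Nat.card {w : Fin n → Fin k // ∀ i : Fin n, w i = w (l - i)} =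
        if Even n then (if Even l.val then k ^ (n / 2 + 1) else k ^ (n / 2))
        else k ^ ((n + 1) / 2)) ∧
    (Even n →
      2 * ∑ l ∈ Finset.range n,
          Nat.card {w : Fin n → Fin k // ∀ i : Fin n, w i = w ((l : Fin n) - i)}
        = n * (k + 1) * k ^ (n / 2)) ∧
    (¬ Even n →
      ∑ l ∈ Finset.range n,
          Nat.card {w : Fin n → Fin k // ∀ i : Fin n, w i = w ((l : Fin n) - i)}
        = n * k ^ ((n + 1) / 2)) := by
  have summand (l : ℕ) (hl : l ∈ range n) :
      Nat.card {w : Fin n → Fin k // ∀ i : Fin n, w i = w ((l : Fin n) - i)} =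
        if Even n then (if Even l then k ^ (n / 2 + 1) else k ^ (n / 2))
        else k ^ ((n + 1) / 2) := by
    rw [card_reflection_fixed_words, Fin.val_cast_of_lt (mem_range.mp hl)]
  refine ⟨card_reflection_fixed_words n k, ?_, ?_⟩
  · rintro ⟨m, rfl⟩
    rw [sum_congr rfl summand, ← two_mul]
    simp only [if_pos (even_two_mul m), sum_range_two_mul_ite_even, smul_eq_mul,
      Nat.mul_div_cancel_left m two_pos, pow_succ]
    ring
  · intro hn
    rw [sum_congr rfl summand]
    simp [hn]
end

section
/- The number of orbits under simultaneous cyclic rotation and the symbol-swap 0↔1 (the group C_n^Π) acting on binary words of length n equals (1/(2n))·[Σ_{d|n, d odd} φ(d)·2^{n/d} + 2·Σ_{d|n, d even} φ(d)·2^{n/d}]. -/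
/-!
Burnside's lemma, for `ZMod n × ZMod 2` acting on words `w : ZMod n → ZMod 2` by
`(l, e) +ᵥ w = fun i => w (i + l) - e`. The words fixed by `(l, e)` are the maps with
`w (i + l) = w i + e`. If `d` is the order of `l`, such a map exists iff `d • e = 0`, i.e. iff
`e = 0` or `d` is even, and then the others differ from it by the `l`-periodic words, of which
there are `2 ^ (n / d)`. Grouping the rotations `l` by their order leaves `φ d` of each order
`d ∣ n`.
-/

open Finset AddAction AddConstMap AddConstMapClass

theorem zsmul_eq_zsmul_of_addOrderOf_nsmul_eq_zero {A B : Type*} [AddGroup A] [AddGroup B]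
    {c : A} {e : B} (he : addOrderOf c • e = 0) {k m : ℤ} (h : k • c = m • c) :
    k • e = m • e :=
  zsmul_eq_zsmul_iff_modEq.mpr <|
    (zsmul_eq_zsmul_iff_modEq.mp h).of_dvd (Int.natCast_dvd_natCast.mpr
      (addOrderOf_dvd_of_nsmul_eq_zero he))

theorem AddSubgroup.index_zmultiples {A : Type*} [AddGroup A] [Finite A] (c : A) :
    (zmultiples c).index = Nat.card A / addOrderOf c := by
  rw [← (zmultiples c).index_mul_card, Nat.card_zmultiples,
    Nat.mul_div_cancel _ (addOrderOf_pos c)]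

namespace AddConstMap

variable {A B : Type*} {c : A} {e : B}

def periodicEquiv [AddGroup A] [AddZeroClass B] (c : A) :
    (A →+c[c, (0 : B)] B) ≃ (A ⧸ AddSubgroup.zmultiples c → B) where
  toFun f := Function.Periodic.lift (f := f) fun x => by rw [map_add_const, add_zero]
  invFun g := ⟨fun x => g x, fun x => by
    rw [QuotientAddGroup.mk_add_of_mem _ (AddSubgroup.mem_zmultiples c), add_zero]⟩
  left_inv _ := rfl
  right_inv g := funext fun x => QuotientAddGroup.induction_on x fun _ => rfl

def subEquiv [Add A] [AddGroup B] (f₀ : A →+c[c, e] B) :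
    (A →+c[c, e] B) ≃ (A →+c[c, (0 : B)] B) where
  toFun f := ⟨fun x => f x - f₀ x, fun x => by simp [map_add_const, sub_eq_add_neg, add_assoc]⟩
  invFun g := ⟨fun x => g x + f₀ x, fun x => by simp [map_add_const, add_assoc]⟩
  left_inv f := by ext x; simp
  right_inv g := by ext x; simp

theorem addOrderOf_nsmul_eq_zero [AddMonoid A] [AddGroup B] (f : A →+c[c, e] B) :
    addOrderOf c • e = 0 := by
  have h := map_add_nsmul f 0 (addOrderOf c)
  rwa [_root_.addOrderOf_nsmul_eq_zero, add_zero, left_eq_add] at h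

theorem nonempty_of_addOrderOf_nsmul_eq_zero [AddGroup A] [AddGroup B]
    (he : addOrderOf c • e = 0) : Nonempty (A →+c[c, e] B) := by
  set H := AddSubgroup.zmultiples c
  -- write `x = r + k x • c` with `r` the chosen representative of `x + H`, and send `x` to `k x • e`
  have hrep : ∀ x : A, ∃ k : ℤ, k • c = -(x : A ⧸ H).out + x := fun x =>
    AddSubgroup.mem_zmultiples_iff.mp (QuotientAddGroup.eq.mp (QuotientAddGroup.out_eq' _))
  choose k hk using hrep
  refine ⟨⟨fun x => k x • e, fun x => ?_⟩⟩
  have hshift : k (x + c) • c = (k x + 1) • c := by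
    rw [hk, QuotientAddGroup.mk_add_of_mem _ (AddSubgroup.mem_zmultiples c), add_zsmul, hk,
      one_zsmul, add_assoc]
  rw [zsmul_eq_zsmul_of_addOrderOf_nsmul_eq_zero he hshift, add_zsmul, one_zsmul]

theorem card_eq [AddGroup A] [AddGroup B] [Finite A] [DecidableEq B] :
    Nat.card (A →+c[c, e] B) =
      if addOrderOf c • e = 0 then Nat.card B ^ (AddSubgroup.zmultiples c).index else 0 := by
  split_ifs with he
  · obtain ⟨f₀⟩ := nonempty_of_addOrderOf_nsmul_eq_zero he
    rw [Nat.card_congr ((subEquiv f₀).trans (periodicEquiv c)), Nat.card_fun,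
      AddSubgroup.index_eq_card]
  · have : IsEmpty (A →+c[c, e] B) := ⟨fun f => he f.addOrderOf_nsmul_eq_zero⟩
    exact Nat.card_of_isEmpty

end AddConstMap

theorem IsAddCyclic.sum_addOrderOf {A M : Type*} [AddGroup A] [Fintype A] [IsAddCyclic A]
    [AddCommMonoid M] (f : ℕ → M) :
    ∑ a : A, f (addOrderOf a) = ∑ d ∈ (Fintype.card A).divisors, d.totient • f d := by
  classical
  rw [← sum_fiberwise_of_maps_to (g := addOrderOf) (t := (Fintype.card A).divisors)
    fun a _ => Nat.mem_divisors.mpr ⟨addOrderOf_dvd_card, Fintype.card_ne_zero⟩]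
  refine sum_congr rfl fun d hd => ?_
  rw [sum_congr rfl fun a ha => congrArg f (mem_filter.mp ha).2, sum_const,
    IsAddCyclic.card_addOrderOf_eq_totient (Nat.dvd_of_mem_divisors hd)]

theorem sum_divisors_add_ite_even (n : ℕ) (g : ℕ → ℕ) :
    ∑ d ∈ n.divisors, (g d + if Even d then g d else 0) =
      ∑ d ∈ n.divisors.filter Odd, g d + 2 * ∑ d ∈ n.divisors.filter Even, g d := by
  rw [sum_add_distrib, ← sum_filter, ← sum_filter_add_sum_filter_not n.divisors Odd]
  simp only [Nat.not_odd_iff_even]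
  ring

theorem sum_zmod_two_ite_nsmul_eq_zero (d x : ℕ) :
    ∑ e : ZMod 2, (if d • e = 0 then x else 0) = x + if Even d then x else 0 := by
  rw [show (univ : Finset (ZMod 2)) = {0, 1} from rfl, sum_pair zero_ne_one, smul_zero, if_pos rfl,
    nsmul_one]
  simp only [ZMod.natCast_eq_zero_iff_even]

namespace WordAction

-- a local instance only: `A × B` acts on `A → B` in several natural ways
abbrev shiftSub (A B : Type*) [AddMonoid A] [AddCommGroup B] : AddAction (A × B) (A → B) where
  vadd g w x := w (x + g.1) - g.2
  zero_vadd w := funext fun x => by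
    change w (x + 0) - 0 = w x
    rw [add_zero, sub_zero]
  add_vadd g h w := funext fun x => by
    change w (x + (g.1 + h.1)) - (g.2 + h.2) = w (x + g.1 + h.1) - h.2 - g.2
    rw [add_assoc, sub_sub, add_comm h.2]

attribute [local instance] shiftSub

variable {A B : Type*}

def fixedByEquiv [AddMonoid A] [AddCommGroup B] (g : A × B) :
    fixedBy (A → B) g ≃ (A →+c[g.1, g.2] B) where
  toFun w := ⟨w, fun x => eq_add_of_sub_eq (congrFun w.2 x)⟩
  invFun f := ⟨f, funext fun x => sub_eq_of_eq_add (map_add_const f x)⟩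
  left_inv _ := rfl
  right_inv _ := rfl

theorem card_orbits_mul_card [AddGroup A] [AddCommGroup B] [Fintype A] [Fintype B]
    [DecidableEq B] :
    Nat.card (orbitRel.Quotient (A × B) (A → B)) * (Fintype.card A * Fintype.card B) =
      ∑ c : A, ∑ e : B,
        if addOrderOf c • e = 0 then Fintype.card B ^ (Fintype.card A / addOrderOf c) else 0 := by
  classical
  rw [← Fintype.card_prod, Nat.card_eq_fintype_card,
    ← sum_card_fixedBy_eq_card_orbits_mul_card_addGroup, Fintype.sum_prod_type]
  refine sum_congr rfl fun c _ => sum_congr rfl fun e _ => ?_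
  rw [← Nat.card_eq_fintype_card, Nat.card_congr (fixedByEquiv _), AddConstMap.card_eq,
    AddSubgroup.index_zmultiples, Nat.card_eq_fintype_card, Nat.card_eq_fintype_card]

theorem orbitRel_zmod_two_iff [AddGroup A] (w₁ w₂ : A → ZMod 2) :
    orbitRel (A × ZMod 2) (A → ZMod 2) w₁ w₂ ↔
      ∃ l : A, w₁ = (fun i => w₂ (i + l)) ∨ w₁ = fun i => 1 - w₂ (i + l) := by
  have sub_one : ∀ a : ZMod 2, a - 1 = 1 - a := by decide
  rw [orbitRel_apply, mem_orbit_iff]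
  constructor
  · rintro ⟨⟨l, e⟩, rfl⟩
    refine ⟨l, ?_⟩
    obtain rfl | rfl : e = 0 ∨ e = 1 := by revert e; decide
    · exact .inl (funext fun x => sub_zero _)
    · exact .inr (funext fun x => sub_one _)
  · rintro ⟨l, rfl | rfl⟩
    · exact ⟨(l, 0), funext fun x => sub_zero _⟩
    · exact ⟨(l, 1), funext fun x => sub_one _⟩

theorem two_mul_card_zmod_necklaces (n : ℕ) [NeZero n] :
    2 * n * Nat.card (Quot (fun w₁ w₂ : ZMod n → ZMod 2 =>
        ∃ l : ZMod n, w₁ = (fun i => w₂ (i + l)) ∨ w₁ = fun i => 1 - w₂ (i + l)))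
      = ∑ d ∈ n.divisors.filter Odd, d.totient * 2 ^ (n / d) +
        2 * ∑ d ∈ n.divisors.filter Even, d.totient * 2 ^ (n / d) := by
  have burnside := card_orbits_mul_card (A := ZMod n) (B := ZMod 2)
  simp only [ZMod.card, sum_zmod_two_ite_nsmul_eq_zero] at burnside
  rw [IsAddCyclic.sum_addOrderOf (fun d => 2 ^ (n / d) + if Even d then 2 ^ (n / d) else 0),
    ZMod.card] at burnside
  simp only [smul_eq_mul, mul_add, mul_ite, mul_zero] at burnside
  rw [Nat.card_congr (Quot.congrRight fun w₁ w₂ => (orbitRel_zmod_two_iff w₁ w₂).symm),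
    ← sum_divisors_add_ite_even, ← burnside, mul_comm 2 n, mul_comm]
  rfl

end WordAction

theorem permuted_necklace_count_binary_general (n : ℕ) :
    2 * n * Nat.card (Quot (fun w₁ w₂ : Fin n → Fin 2 =>
        ∃ l : Fin n, w₁ = (fun i => w₂ (i + l)) ∨ w₁ = fun i => 1 - w₂ (i + l)))
      = ∑ d ∈ n.divisors.filter (fun d => Odd d), Nat.totient d * 2 ^ (n / d) +
        2 * ∑ d ∈ n.divisors.filter (fun d => Even d), Nat.totient d * 2 ^ (n / d) := by
  rcases n with _ | n
  · simp
  -- `ZMod (n + 1)` is `Fin (n + 1)` by definition, with the same arithmetic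
  · exact WordAction.two_mul_card_zmod_necklaces (n + 1)

theorem permuted_necklace_count_binary (n : ℕ) (hn : 0 < n) :
    2 * n * Nat.card (Quot (fun w₁ w₂ : Fin n → Fin 2 =>
        ∃ l : Fin n, w₁ = (fun i => w₂ (i + l)) ∨ w₁ = fun i => 1 - w₂ (i + l)))
      = ∑ d ∈ n.divisors.filter (fun d => Odd d), Nat.totient d * 2 ^ (n / d) +
        2 * ∑ d ∈ n.divisors.filter (fun d => Even d), Nat.totient d * 2 ^ (n / d) :=
  permuted_necklace_count_binary_general n
end

section
/- Let π be the letter-flip 0↔1 on binary words of length n composed with rotation by l. If n/gcd(n,l) is odd then no word is fixed by πr^l; if n/gcd(n,l) is even then exactly 2^{gcd(n,l)} words are fixed by πr^l. -/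
/-!
Let `d = gcd n l`; then `m = n / d` is the additive order of `l` in `Fin n`. A fixed word
satisfies `w (i + l) = φ (w i)` with `φ` the flip, so `w (i + k • l) = φ^[k] (w i)`; for odd `m`,
taking `k = m` makes `w i` a fixed point of `φ`. For even `m` the word `i ↦ ⌊i / d⌋ mod 2` is fixed,
since adding `l` adds the odd number `l / d` to `⌊i / d⌋` modulo the even number `m`. Any two fixed
words differ by an `l`-periodic word, i.e. a function on the `d` cosets of the subgroup generated
by `l`, so there are `2 ^ d` of them.
-/

open Function AddSubgroup

section

variable {G : Type*} [AddGroup G]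

theorem apply_add_nsmul_eq_iterate {α : Type*} {f : G → α} {φ : α → α} {g : G}
    (h : ∀ x, f (x + g) = φ (f x)) (k : ℕ) (x : G) : f (x + k • g) = φ^[k] (f x) := by
  induction k with
  | zero => simp
  | succ k ih => rw [succ_nsmul, ← add_assoc, h, ih, iterate_succ_apply']

theorem isEmpty_of_odd_addOrderOf {α : Type*} {φ : α → α} (hφ : Involutive φ)
    (hfix : ∀ a, φ a ≠ a) {g : G} (hg : Odd (addOrderOf g)) :
    IsEmpty {f : G → α // ∀ x, f (x + g) = φ (f x)} := by
  refine ⟨fun ⟨f, hf⟩ => hfix (f 0) ?_⟩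
  have := apply_add_nsmul_eq_iterate hf (addOrderOf g) 0
  rwa [addOrderOf_nsmul_eq_zero, add_zero, hφ.iterate_odd hg, eq_comm] at this

def applyAddEqSubEquivAntiperiodic {A : Type*} [AddCommGroup A] {g : G} {a : A} (w₀ : G → A)
    (hw₀ : ∀ x, w₀ (x + g) = a - w₀ x) :
    {w : G → A // ∀ x, w (x + g) = a - w x} ≃ {u : G → A // Antiperiodic u g} where
  toFun w := ⟨w.1 - w₀, fun x => by simp only [Pi.sub_apply, w.2, hw₀]; abel⟩
  invFun u := ⟨u.1 + w₀, fun x => by simp only [Pi.add_apply, u.2 x, hw₀]; abel⟩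
  left_inv w := by ext; simp
  right_inv u := by ext; simp

def periodicEquivQuotient (α : Type*) (g : G) :
    {f : G → α // Periodic f g} ≃ (G ⧸ zmultiples g → α) where
  toFun f := f.2.lift
  invFun f := ⟨fun x => f x, fun x => congrArg f <| QuotientAddGroup.eq.2 <| by
    rw [neg_add_rev, neg_add_cancel_right]
    exact neg_mem (mem_zmultiples g)⟩
  left_inv f := rfl
  right_inv f := by ext ⟨x⟩; rfl

theorem Nat.card_periodic [Finite G] (α : Type*) (g : G) :
    Nat.card {f : G → α // Periodic f g} = Nat.card α ^ (zmultiples g).index := by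
  rw [Nat.card_congr (periodicEquivQuotient α g), Nat.card_fun, index]

theorem Nat.card_apply_add_eq_one_sub [Finite G] {g : G} (w₀ : G → Fin 2)
    (hw₀ : ∀ x, w₀ (x + g) = 1 - w₀ x) :
    Nat.card {w : G → Fin 2 // ∀ x, w (x + g) = 1 - w x} = 2 ^ (zmultiples g).index := by
  have neg_eq_self : ∀ a : Fin 2, -a = a := by decide
  rw [Nat.card_congr (applyAddEqSubEquivAntiperiodic w₀ hw₀),
    Nat.card_congr (Equiv.subtypeEquivRight (q := (Periodic · g)) fun u => by
      simp only [Antiperiodic, Periodic, neg_eq_self]),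
    Nat.card_periodic, Nat.card_fin]

end

theorem Fin.addOrderOf_eq_div_gcd {n : ℕ} [NeZero n] (l : Fin n) :
    addOrderOf l = n / n.gcd l.val := by
  obtain ⟨k, rfl⟩ : ∃ k, n = k + 1 := Nat.exists_eq_succ_of_ne_zero (NeZero.ne n)
  exact ZMod.addOrderOf_coe l.val k.succ_ne_zero ▸
    congrArg addOrderOf (Fin.cast_val_eq_self l).symm

theorem Fin.index_zmultiples {n : ℕ} [NeZero n] (l : Fin n) :
    (zmultiples l).index = n.gcd l.val := by
  have h := (zmultiples l).card_mul_index
  rw [Nat.card_zmultiples, Nat.card_eq_fintype_card, Fintype.card_fin] at h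
  rw [Nat.eq_div_of_mul_eq_right (addOrderOf_pos l).ne' h, addOrderOf_eq_div_gcd,
    Nat.div_div_self (Nat.gcd_dvd_left _ _) (NeZero.ne n)]

theorem Nat.even_add_mul_mod_mul_div_iff {a c d m : ℕ} (hd : 0 < d) (hm : Even m) (hc : Odd c) :
    Even ((a + d * c) % (d * m) / d) ↔ ¬ Even (a / d) := by
  rw [Nat.mod_mul_right_div_self, Nat.add_mul_div_left _ _ hd, Nat.even_iff,
    Nat.mod_mod_of_dvd _ (even_iff_two_dvd.1 hm), ← Nat.even_iff, Nat.even_add]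
  simp [Nat.not_even_iff_odd.2 hc]

theorem Fin.even_val_add_div_gcd_iff {n : ℕ} [NeZero n] (l i : Fin n)
    (hl : Even (n / n.gcd l.val)) :
    Even ((i + l).val / n.gcd l.val) ↔ ¬ Even (i.val / n.gcd l.val) := by
  have hd : 0 < n.gcd l.val := Nat.gcd_pos_of_pos_left _ (Nat.pos_of_neZero n)
  have hc : Odd (l.val / n.gcd l.val) := Nat.Coprime.odd_of_left <|
    (Nat.coprime_div_gcd_div_gcd hd).coprime_dvd_left (even_iff_two_dvd.1 hl)
  have h := Nat.even_add_mul_mod_mul_div_iff (a := i.val) hd hl hc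
  rwa [Nat.mul_div_cancel' (Nat.gcd_dvd_left _ _), Nat.mul_div_cancel' (Nat.gcd_dvd_right _ _),
    ← Fin.val_add] at h

theorem flip_rotation_fixed_words_binary (n : ℕ) [NeZero n] (l : Fin n) :
    (Odd (n / Nat.gcd n l.val) →
      Nat.card {w : Fin n → Fin 2 // ∀ i : Fin n, w i = 1 - w (i + l)} = 0) ∧
    (Even (n / Nat.gcd n l.val) →
      Nat.card {w : Fin n → Fin 2 // ∀ i : Fin n, w i = 1 - w (i + l)} =
        2 ^ Nat.gcd n l.val) := by
  have hflip : ∀ a b : Fin 2, a = 1 - b ↔ b = 1 - a := by decide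
  rw [Nat.card_congr (Equiv.subtypeEquivRight fun w => forall_congr' fun i => hflip _ _)]
  refine ⟨fun hodd => ?_, fun heven => ?_⟩
  · rw [← Fin.addOrderOf_eq_div_gcd] at hodd
    have := isEmpty_of_odd_addOrderOf (φ := fun a : Fin 2 => 1 - a) (sub_sub_cancel 1)
      (by decide) hodd
    exact Nat.card_of_isEmpty
  · rw [← Fin.index_zmultiples]
    refine Nat.card_apply_add_eq_one_sub (fun i => if Even (i.val / n.gcd l.val) then 0 else 1) ?_
    intro i
    simp only [Fin.even_val_add_div_gcd_iff l i heven]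
    split_ifs <;> decide
end

section
/- The number of orbits under C_n^Π (cyclic rotation combined with the binary letter-flip) of binary words of length n whose primitive period is exactly n equals (1/(2n))·Σ_{d|n, d odd} μ(d)·2^{n/d}. -/
open Finset

namespace PLN

/-! ### Periods of infinite binary words -/

def isPer (F : ℕ → Fin 2) (k : ℕ) : Prop := ∀ j, F (j + k) = F j
def isAnti (F : ℕ → Fin 2) (k : ℕ) : Prop := ∀ j, F (j + k) = F j + 1

lemma isPer.add {F : ℕ → Fin 2} {k l : ℕ} (h : isPer F k) (h' : isPer F l) :
    isPer F (k + l) := fun j => by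
  have e : j + (k + l) = (j + l) + k := by ring
  rw [e, h, h']

lemma isPer.mul {F : ℕ → Fin 2} {k : ℕ} (h : isPer F k) (q : ℕ) : isPer F (k * q) := by
  induction q with
  | zero => intro j; simp
  | succ q ih => have := ih.add h; simpa [Nat.mul_succ] using this

lemma isPer.mod {F : ℕ → Fin 2} {k g : ℕ} (h : isPer F k) (hg : isPer F g) :
    isPer F (k % g) := fun j => by
  calc F (j + k % g) = F (j + k % g + g * (k / g)) := ((hg.mul (k / g)) _).symm
    _ = F (j + k) := by rw [add_assoc, Nat.mod_add_div]
    _ = F j := h j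

lemma isPer.mod_eq {F : ℕ → Fin 2} {d : ℕ} (h : isPer F d) (k : ℕ) : F (k % d) = F k := by
  conv_rhs => rw [← Nat.mod_add_div k d]
  exact ((h.mul (k / d)) (k % d)).symm

lemma isAnti.add_per {F : ℕ → Fin 2} {k l : ℕ} (h : isAnti F k) (hl : isPer F l) :
    isAnti F (k + l) := fun j => by
  have e : j + (k + l) = (j + k) + l := by ring
  rw [e, hl, h]

lemma isAnti.mod {F : ℕ → Fin 2} {k g : ℕ} (h : isAnti F k) (hg : isPer F g) :
    isAnti F (k % g) := fun j => by
  calc F (j + k % g) = F (j + k % g + g * (k / g)) := ((hg.mul (k / g)) _).symm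
    _ = F (j + k) := by rw [add_assoc, Nat.mod_add_div]
    _ = F j + 1 := h j

lemma isAnti.add_anti {F : ℕ → Fin 2} {k l : ℕ} (h : isAnti F k) (h' : isAnti F l) :
    isPer F (k + l) := fun j => by
  have e : j + (k + l) = (j + l) + k := by ring
  have fin2 : ∀ x : Fin 2, x + 1 + 1 = x := by decide
  rw [e, h, h', fin2]

lemma isAnti.not_zero {F : ℕ → Fin 2} (h : isAnti F 0) : False := by
  have h0 := h 0
  have fin2 : ∀ x : Fin 2, x ≠ x + 1 := by decide
  simp only [Nat.add_zero] at h0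
  exact fin2 (F 0) h0

/-! ### Minimal period -/

noncomputable def mp (F : ℕ → Fin 2) : ℕ := sInf {k | 0 < k ∧ isPer F k}

lemma mp_spec {F : ℕ → Fin 2} (h : ∃ k, 0 < k ∧ isPer F k) :
    0 < mp F ∧ isPer F (mp F) := Nat.sInf_mem h

lemma mp_dvd {F : ℕ → Fin 2} (h : ∃ k, 0 < k ∧ isPer F k) {k : ℕ} (hk : isPer F k) :
    mp F ∣ k := by
  obtain ⟨pos, per⟩ := mp_spec h
  have hmod : isPer F (k % mp F) := hk.mod per
  rcases Nat.eq_zero_or_pos (k % mp F) with h0 | hpos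
  · exact Nat.dvd_of_mod_eq_zero h0
  · have hle : mp F ≤ k % mp F := Nat.sInf_le ⟨hpos, hmod⟩
    have := Nat.mod_lt k pos
    omega

lemma anti_mp {F : ℕ → Fin 2} (h : ∃ k, 0 < k ∧ isPer F k) {m : ℕ} (ha : isAnti F m) :
    2 * (m % mp F) = mp F := by
  obtain ⟨pos, per⟩ := mp_spec h
  have hs : isAnti F (m % mp F) := ha.mod per
  have hne : m % mp F ≠ 0 := by
    intro h0; exact (h0 ▸ hs).not_zero
  have hper2 : isPer F (m % mp F + m % mp F) := hs.add_anti hs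
  obtain ⟨c, hc⟩ := mp_dvd h hper2
  have hlt : m % mp F < mp F := Nat.mod_lt _ pos
  have hc2 : c < 2 := by
    by_contra hcge
    have : mp F * 2 ≤ mp F * c := Nat.mul_le_mul_left _ (by omega)
    omega
  interval_cases c <;> omega


/-! ### From finite words to infinite periodic words -/

def W {n : ℕ} (w : Fin n → Fin 2) : ℕ → Fin 2 := fun k =>
  if h : n = 0 then 0 else w ⟨k % n, Nat.mod_lt k (Nat.pos_of_ne_zero h)⟩

lemma W_eq {n : ℕ} (hn : n ≠ 0) (w : Fin n → Fin 2) (k : ℕ) (i : Fin n)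
    (hi : k % n = i.val) : W w k = w i := by
  rw [W, dif_neg hn]
  congr 1
  exact Fin.ext hi

lemma W_apply {n : ℕ} (hn : n ≠ 0) (w : Fin n → Fin 2) (k : ℕ) :
    W w k = w ⟨k % n, Nat.mod_lt k (Nat.pos_of_ne_zero hn)⟩ := W_eq hn w k _ rfl

lemma W_val {n : ℕ} (hn : n ≠ 0) (w : Fin n → Fin 2) (i : Fin n) : W w i.val = w i :=
  W_eq hn w i.val i (Nat.mod_eq_of_lt i.isLt)

lemma isPer_W {n : ℕ} (hn : n ≠ 0) (w : Fin n → Fin 2) : isPer (W w) n := fun j => by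
  rw [W_apply hn, W_apply hn]
  congr 1
  exact Fin.ext (Nat.add_mod_right j n)

lemma exists_pos_per {n : ℕ} (hn : n ≠ 0) (w : Fin n → Fin 2) :
    ∃ k, 0 < k ∧ isPer (W w) k := ⟨n, Nat.pos_of_ne_zero hn, isPer_W hn w⟩

lemma mp_dvd_card {n : ℕ} (hn : n ≠ 0) (w : Fin n → Fin 2) : mp (W w) ∣ n :=
  mp_dvd (exists_pos_per hn w) (isPer_W hn w)

/-! ### Bridging finite-level and infinite-level periods -/

lemma per_iff {n : ℕ} (hn : n ≠ 0) (w : Fin n → Fin 2) (l : Fin n) :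
    (∀ i, w (i + l) = w i) ↔ isPer (W w) l.val := by
  constructor
  · intro h j
    have h1 : W w (j + l.val) = w (⟨j % n, Nat.mod_lt j (Nat.pos_of_ne_zero hn)⟩ + l) := by
      refine W_eq hn w _ _ ?_
      rw [Fin.val_add]
      exact (Nat.mod_add_mod j n l.val).symm
    rw [h1, h, W_apply hn]
  · intro h i
    have h1 : w (i + l) = W w (i.val + l.val) := by
      refine (W_eq hn w _ _ ?_).symm
      rw [Fin.val_add]
    rw [h1, h, W_val hn]

lemma anti_iff {n : ℕ} (hn : n ≠ 0) (w : Fin n → Fin 2) (l : Fin n) :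
    (∀ i, w (i + l) = w i + 1) ↔ isAnti (W w) l.val := by
  constructor
  · intro h j
    have h1 : W w (j + l.val) = w (⟨j % n, Nat.mod_lt j (Nat.pos_of_ne_zero hn)⟩ + l) := by
      refine W_eq hn w _ _ ?_
      rw [Fin.val_add]
      exact (Nat.mod_add_mod j n l.val).symm
    rw [h1, h, W_apply hn]
  · intro h i
    have h1 : w (i + l) = W w (i.val + l.val) := by
      refine (W_eq hn w _ _ ?_).symm
      rw [Fin.val_add]
    rw [h1, h, W_val hn]

lemma aperiodic_iff {n : ℕ} [NeZero n] (w : Fin n → Fin 2) :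
    (∀ l : Fin n, (∀ i : Fin n, w (i + l) = w i) → l = 0) ↔ mp (W w) = n := by
  have hn : n ≠ 0 := NeZero.ne n
  have hdvd := mp_dvd_card hn w
  have hpos := (mp_spec (exists_pos_per hn w)).1
  have hper := (mp_spec (exists_pos_per hn w)).2
  constructor
  · intro h
    by_contra hne
    have hlt : mp (W w) < n := lt_of_le_of_ne (Nat.le_of_dvd (Nat.pos_of_ne_zero hn) hdvd) hne
    have := h ⟨mp (W w), hlt⟩ ((per_iff hn w _).mpr hper)
    rw [Fin.ext_iff] at this
    simp only [Fin.val_zero] at this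
    omega
  · intro h l hl
    have hper' : isPer (W w) l.val := (per_iff hn w l).mp hl
    by_contra hne
    have hv : 0 < l.val := by
      rcases Nat.eq_zero_or_pos l.val with h0 | h0
      · exact absurd (Fin.ext (by simpa using h0)) hne
      · exact h0
    have : mp (W w) ≤ l.val := Nat.sInf_le ⟨hv, hper'⟩
    have := l.isLt
    omega

/-! ### Restriction and extension -/

def Res (d : ℕ) {n : ℕ} (w : Fin n → Fin 2) : Fin d → Fin 2 := fun j => W w j.val
def Ext (n : ℕ) {d : ℕ} (v : Fin d → Fin 2) : Fin n → Fin 2 := fun i => W v i.val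

lemma W_Ext {n d : ℕ} (hd : d ∣ n) (hd0 : d ≠ 0) (hn : n ≠ 0) (v : Fin d → Fin 2) :
    W (Ext n v) = W v := by
  funext k
  rw [W_apply hn]
  show W v (k % n) = W v k
  rw [W_apply hd0, W_apply hd0]
  congr 1
  exact Fin.ext (Nat.mod_mod_of_dvd k hd)

lemma W_Res {n d : ℕ} {w : Fin n → Fin 2} (hper : isPer (W w) d) (hd0 : d ≠ 0) :
    W (Res d w) = W w := by
  funext k
  rw [W_apply hd0]
  show W w (k % d) = W w k
  exact hper.mod_eq k

lemma Res_Ext {n d : ℕ} (hd : d ∣ n) (hd0 : d ≠ 0) (hn : n ≠ 0) (v : Fin d → Fin 2) :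
    Res d (Ext n v) = v := by
  funext j
  show W (Ext n v) j.val = v j
  rw [W_Ext hd hd0 hn, W_val hd0]

lemma Ext_Res {n d : ℕ} {w : Fin n → Fin 2} (hper : isPer (W w) d) (hd0 : d ≠ 0)
    (hn : n ≠ 0) : Ext n (Res d w) = w := by
  funext i
  show W (Res d w) i.val = w i
  rw [W_Res hper hd0, W_val hn]

/-- The master equivalence: `d`-periodic words of length `n` with property `P` of the
associated infinite word correspond to words of length `d` with property `P`. -/
def perEquiv {n d : ℕ} (P : (ℕ → Fin 2) → Prop) (hd : d ∣ n) (hd0 : d ≠ 0) (hn : n ≠ 0) :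
    {w : Fin n → Fin 2 // isPer (W w) d ∧ P (W w)} ≃ {v : Fin d → Fin 2 // P (W v)} where
  toFun w := ⟨Res d w.1, by rw [W_Res w.2.1 hd0]; exact w.2.2⟩
  invFun v := ⟨Ext n v.1, by
    constructor
    · rw [W_Ext hd hd0 hn]; exact isPer_W hd0 v.1
    · rw [W_Ext hd hd0 hn]; exact v.2⟩
  left_inv w := Subtype.ext (Ext_Res w.2.1 hd0 hn)
  right_inv v := Subtype.ext (Res_Ext hd hd0 hn v.1)

/-! ### Counting -/

lemma card_partition {α : Type} [Fintype α] (s : Finset ℕ) (f : α → ℕ)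
    (h : ∀ a, f a ∈ s) :
    ∑ d ∈ s, Nat.card {a // f a = d} = Nat.card α := by
  classical
  rw [Nat.card_eq_fintype_card, ← Finset.card_univ,
    Finset.card_eq_sum_card_fiberwise (fun a _ => h a)]
  exact Finset.sum_congr rfl fun d _ => by
    rw [Nat.card_eq_fintype_card, Fintype.card_subtype]

/-- Number of aperiodic binary words of length `d`. -/
noncomputable def A (d : ℕ) : ℕ := Nat.card {v : Fin d → Fin 2 // mp (W v) = d}

/-- Number of aperiodic binary words of length `d` antiperiodic with antiperiod `d/2`. -/
noncomputable def B (d : ℕ) : ℕ :=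
  Nat.card {v : Fin d → Fin 2 // mp (W v) = d ∧ isAnti (W v) (d / 2)}

lemma sum_A {n : ℕ} (hn : n ≠ 0) : ∑ d ∈ n.divisors, A d = 2 ^ n := by
  have h := card_partition (α := Fin n → Fin 2) n.divisors (fun w => mp (W w))
    (fun w => Nat.mem_divisors.mpr ⟨mp_dvd_card hn w, hn⟩)
  rw [Nat.card_eq_fintype_card] at h
  simp only [Fintype.card_fun, Fintype.card_fin] at h
  rw [← h]
  refine Finset.sum_congr rfl fun d hd => ?_
  obtain ⟨hdvd, -⟩ := Nat.mem_divisors.mp hd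
  have hd0 : d ≠ 0 := (Nat.pos_of_mem_divisors hd).ne'
  have e1 : {w : Fin n → Fin 2 // mp (W w) = d} ≃
      {w : Fin n → Fin 2 // isPer (W w) d ∧ mp (W w) = d} :=
    Equiv.subtypeEquivRight fun w => by
      constructor
      · intro h2
        exact ⟨h2 ▸ (mp_spec (exists_pos_per hn w)).2, h2⟩
      · exact fun h2 => h2.2
  rw [A, ← Nat.card_congr (e1.trans (perEquiv (fun F => mp F = d) hdvd hd0 hn))]

/-! ### Antiperiodic words -/

def bit (q : ℕ) : Fin 2 := ⟨q % 2, Nat.mod_lt q (by norm_num)⟩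

lemma bit_succ (q : ℕ) : bit (q + 1) = bit q + 1 := by
  refine Fin.ext ?_
  show (q + 1) % 2 = (bit q + 1).val
  rw [Fin.val_add]
  show (q + 1) % 2 = (q % 2 + (1 : Fin 2).val) % 2
  omega

lemma isAnti.npow {F : ℕ → Fin 2} {m : ℕ} (h : isAnti F m) (q r : ℕ) :
    F (r + m * q) = F r + bit q := by
  induction q with
  | zero =>
      show F (r + 0) = F r + bit 0
      have : bit 0 = 0 := rfl
      rw [this, Nat.add_zero, add_zero]
  | succ q ih =>
      have e : r + m * (q + 1) = (r + m * q) + m := by ring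
      rw [e, h, ih, bit_succ, add_assoc]

lemma W_AExt {n m : ℕ} (hm : n = 2 * m) (hm0 : m ≠ 0)
    (v : Fin m → Fin 2) (k : ℕ) :
    W (fun i : Fin n => W v i.val + bit (i.val / m)) k = W v k + bit (k / m) := by
  have hn : n ≠ 0 := by omega
  rw [W_apply hn]
  show W v (k % n) + bit ((k % n) / m) = W v k + bit (k / m)
  congr 1
  · rw [W_apply hm0, W_apply hm0]
    congr 1
    refine Fin.ext ?_
    show k % n % m = k % m
    exact Nat.mod_mod_of_dvd k ⟨2, by omega⟩
  · refine Fin.ext ?_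
    show (k % n) / m % 2 = k / m % 2
    have : k % n / m = k / m % 2 := by
      rw [hm, Nat.mul_comm]
      exact Nat.mod_mul_right_div_self k m 2
    rw [this]
    omega

def antiEquiv {n m : ℕ} (hm : n = 2 * m) (hm0 : m ≠ 0) :
    {w : Fin n → Fin 2 // isAnti (W w) m} ≃ (Fin m → Fin 2) where
  toFun w := Res m w.1
  invFun v := ⟨fun i : Fin n => W v i.val + bit (i.val / m), by
    intro j
    rw [W_AExt hm hm0, W_AExt hm hm0]
    rw [isPer_W hm0 v j, Nat.add_div_right j (Nat.pos_of_ne_zero hm0), bit_succ, add_assoc]⟩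
  left_inv w := by
    have hn : n ≠ 0 := by omega
    refine Subtype.ext (funext fun i => ?_)
    show W (Res m w.1) i.val + bit (i.val / m) = w.1 i
    have hres : ∀ k, W (Res m w.1) k = W w.1 (k % m) := by
      intro k
      rw [W_apply hm0]
      rfl
    rw [hres]
    have := w.2.npow (i.val / m) (i.val % m)
    rw [Nat.mod_add_div] at this
    rw [← this, W_val hn]
  right_inv v := by
    funext j
    show W (fun i : Fin n => W v i.val + bit (i.val / m)) j.val = v j
    rw [W_AExt hm hm0, W_val hm0, Nat.div_eq_of_lt j.isLt]
    show v j + 0 = v j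
    rw [add_zero]

lemma card_anti {n m : ℕ} (hm : n = 2 * m) (hm0 : m ≠ 0) :
    Nat.card {w : Fin n → Fin 2 // isAnti (W w) m} = 2 ^ m := by
  rw [Nat.card_congr (antiEquiv hm hm0), Nat.card_eq_fintype_card]
  simp [Fintype.card_fun]

/-! ### Arithmetic helpers -/

lemma arith_odd {n d : ℕ} (hn : n ≠ 0) (h2 : 2 ∣ n) (hd : d ∣ n) (hodd : Odd (n / d)) :
    2 ∣ d ∧ n / 2 % d = d / 2 := by
  obtain ⟨t, ht⟩ := hodd
  have hn' : n = d * (2 * t + 1) := by rw [← ht, Nat.mul_div_cancel' hd]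
  obtain ⟨k, hk, h2m⟩ : ∃ k, k = d * t ∧ n = 2 * k + d := ⟨d * t, rfl, by rw [hn']; ring⟩
  have hd0 : d ≠ 0 := by rintro rfl; omega
  have h2d : 2 ∣ d := by omega
  refine ⟨h2d, ?_⟩
  have hm2 : n / 2 = d * t + d / 2 := by omega
  rw [hm2, Nat.mul_add_mod]
  exact Nat.mod_eq_of_lt (by omega)

lemma arith_odd' {n d m : ℕ} (hn : n ≠ 0) (hm : n = 2 * m) (hd : d ∣ n)
    (hs : 2 * (m % d) = d) : Odd (n / d) := by
  have hd0 : d ≠ 0 := by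
    rintro rfl
    simp at hs
    omega
  have h1 : d * (m / d) + m % d = m := Nat.div_add_mod m d
  have h2 : n = d * (2 * (m / d) + 1) := by
    have e : d * (2 * (m / d) + 1) = 2 * (d * (m / d)) + d := by ring
    omega
  rw [h2, Nat.mul_div_cancel_left _ (Nat.pos_of_ne_zero hd0)]
  exact ⟨m / d, by ring⟩

/-! ### The antiperiodic count -/

lemma sum_B {n m : ℕ} (hm : n = 2 * m) (hm0 : m ≠ 0) :
    ∑ d ∈ n.divisors.filter (fun d => Odd (n / d)), B d = 2 ^ m := by
  classical
  have hn : n ≠ 0 := by omega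
  have hmem : ∀ w : {w : Fin n → Fin 2 // isAnti (W w) m},
      mp (W w.1) ∈ n.divisors.filter (fun d => Odd (n / d)) := by
    intro w
    have hdvd := mp_dvd_card hn w.1
    have hs := anti_mp (exists_pos_per hn w.1) w.2
    exact Finset.mem_filter.mpr ⟨Nat.mem_divisors.mpr ⟨hdvd, hn⟩, arith_odd' hn hm hdvd hs⟩
  have h := card_partition (α := {w : Fin n → Fin 2 // isAnti (W w) m})
    (n.divisors.filter fun d => Odd (n / d)) (fun w => mp (W w.1)) hmem
  rw [card_anti hm hm0] at h
  rw [← h]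
  refine Finset.sum_congr rfl fun d hd => ?_
  obtain ⟨hd', hodd⟩ := Finset.mem_filter.mp hd
  have hdvd : d ∣ n := (Nat.mem_divisors.mp hd').1
  have hd0 : d ≠ 0 := (Nat.pos_of_mem_divisors hd').ne'
  have e1 : {a : {w : Fin n → Fin 2 // isAnti (W w) m} // mp (W a.1) = d} ≃
      {w : Fin n → Fin 2 // isAnti (W w) m ∧ mp (W w) = d} :=
    Equiv.subtypeSubtypeEquivSubtypeInter
      (fun w : Fin n → Fin 2 => isAnti (W w) m) (fun w => mp (W w) = d)
  have key : ∀ w : Fin n → Fin 2,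
      (isAnti (W w) m ∧ mp (W w) = d) ↔
      (isPer (W w) d ∧ (mp (W w) = d ∧ isAnti (W w) (d / 2))) := by
    intro w
    constructor
    · rintro ⟨hanti, hmpd⟩
      have hper : isPer (W w) d := hmpd ▸ (mp_spec (exists_pos_per hn w)).2
      have hs := anti_mp (exists_pos_per hn w) hanti
      rw [hmpd] at hs
      have hmod : m % d = d / 2 := by omega
      exact ⟨hper, hmpd, hmod ▸ hanti.mod hper⟩
    · rintro ⟨hper, hmpd, hanti⟩
      refine ⟨?_, hmpd⟩
      obtain ⟨h2d, hmod⟩ := arith_odd hn ⟨m, hm⟩ hdvd hodd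
      have hmod' : m % d = d / 2 := by
        have : n / 2 = m := by omega
        rw [← this]; exact hmod
      have h1 : d * (m / d) + m % d = m := Nat.div_add_mod m d
      have := hanti.add_per (hper.mul (m / d))
      have e : d / 2 + d * (m / d) = m := by omega
      rwa [e] at this
  have e2 : {w : Fin n → Fin 2 // isAnti (W w) m ∧ mp (W w) = d} ≃
      {v : Fin d → Fin 2 // mp (W v) = d ∧ isAnti (W v) (d / 2)} :=
    (Equiv.subtypeEquivRight key).trans
      (perEquiv (fun F => mp F = d ∧ isAnti F (d / 2)) hdvd hd0 hn)
  rw [Nat.card_congr (e1.trans e2)]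
  rfl

/-! ### Möbius inversion for A -/

open ArithmeticFunction in
lemma moebius_A {n : ℕ} (hn : n ≠ 0) :
    (A n : ℤ) = ∑ d ∈ n.divisors, (moebius d : ℤ) * 2 ^ (n / d) := by
  have h := (ArithmeticFunction.sum_eq_iff_sum_mul_moebius_eq
    (R := ℤ) (f := fun d => (A d : ℤ)) (g := fun k => 2 ^ k)).mp ?_ n (Nat.pos_of_ne_zero hn)
  · rw [← h]
    exact Nat.sum_divisorsAntidiagonal (fun a b => ((moebius a : ℤ) * 2 ^ b))
  · intro k hk
    rw [← Nat.cast_sum, sum_A hk.ne']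
    push_cast
    ring

/-! ### Odd divisors -/

lemma odd_divisors {n : ℕ} (hn : n ≠ 0) :
    n.divisors.filter (fun d => Odd d) = (ordCompl[2] n).divisors := by
  ext e
  simp only [Finset.mem_filter, Nat.mem_divisors]
  have hu0 : ordCompl[2] n ≠ 0 := (Nat.ordCompl_pos 2 hn).ne'
  have hnd : ¬ 2 ∣ ordCompl[2] n := Nat.not_dvd_ordCompl Nat.prime_two hn
  constructor
  · rintro ⟨⟨he, -⟩, hodd⟩
    refine ⟨?_, hu0⟩
    have hcop : e.Coprime (2 ^ n.factorization 2) :=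
      Nat.Coprime.pow_right _ (Nat.coprime_two_right.mpr hodd)
    refine hcop.dvd_of_dvd_mul_left ?_
    rw [Nat.ordProj_mul_ordCompl_eq_self n 2]
    exact he
  · rintro ⟨he, -⟩
    refine ⟨⟨he.trans (Nat.ordCompl_dvd n 2), hn⟩, ?_⟩
    have h2e : ¬ 2 ∣ e := fun hd => hnd (hd.trans he)
    rw [Nat.odd_iff]
    omega

lemma half_odd_divisors {n : ℕ} (hn : n ≠ 0) (h2 : 2 ∣ n) :
    (n / 2).divisors.filter (fun d => Odd d) = n.divisors.filter (fun d => Odd d) := by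
  ext e
  simp only [Finset.mem_filter, Nat.mem_divisors]
  have hn2 : n / 2 ≠ 0 := by omega
  constructor
  · rintro ⟨⟨he, -⟩, hodd⟩
    exact ⟨⟨he.trans (Nat.div_dvd_of_dvd h2), hn⟩, hodd⟩
  · rintro ⟨⟨he, -⟩, hodd⟩
    refine ⟨⟨?_, hn2⟩, hodd⟩
    have hcop : e.Coprime 2 := Nat.coprime_two_right.mpr hodd
    refine hcop.dvd_of_dvd_mul_left ?_
    rw [Nat.mul_div_cancel' h2]
    exact he

lemma odd_of_dvd {m v : ℕ} (hv : Odd v) (h : m ∣ v) : Odd m := by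
  obtain ⟨k, rfl⟩ := h
  exact Nat.Odd.of_mul_left hv

/-! ### Möbius inversion for B -/

open ArithmeticFunction in
lemma moebius_B {n : ℕ} (hn : n ≠ 0) (h2 : 2 ∣ n) :
    (B n : ℤ) = ∑ e ∈ (n / 2).divisors.filter (fun e => Odd e),
      (moebius e : ℤ) * 2 ^ (n / 2 / e) := by
  set a := n.factorization 2 with ha
  set c := 2 ^ a with hc
  set u := ordCompl[2] n with hudef
  have hcu : c * u = n := Nat.ordProj_mul_ordCompl_eq_self n 2
  have hc0 : c ≠ 0 := by positivity
  have hu0 : u ≠ 0 := (Nat.ordCompl_pos 2 hn).ne'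
  have hund : ¬ 2 ∣ u := Nat.not_dvd_ordCompl Nat.prime_two hn
  have huodd : Odd u := by rw [Nat.odd_iff]; omega
  have hapos : 0 < a := Nat.Prime.factorization_pos_of_dvd Nat.prime_two hn h2
  obtain ⟨c2, hc2⟩ : 2 ∣ c := dvd_pow_self 2 hapos.ne'
  -- key divisibility: if `d ∣ c*v` with `c*v/d` odd and `v` odd then `c ∣ d`
  have hcdvd : ∀ v d : ℕ, v ≠ 0 → Odd v → d ∣ c * v → Odd (c * v / d) → c ∣ d := by
    intro v d hv0 hvodd hdvd hodd
    have hd0 : d ≠ 0 := by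
      rintro rfl
      rw [Nat.zero_dvd] at hdvd
      exact (by positivity : c * v ≠ 0) hdvd
    have hcv : (c * v).factorization 2 = a := by
      rw [Nat.factorization_mul hc0 hv0]
      simp only [Finsupp.add_apply]
      have h1 : c.factorization 2 = a := by
        rw [hc, Nat.Prime.factorization_pow Nat.prime_two, Finsupp.single_eq_same]
      have h2' : v.factorization 2 = 0 :=
        Nat.factorization_eq_zero_of_not_dvd (by rw [Nat.odd_iff] at hvodd; omega)
      rw [h1, h2']
      omega
    have heq : d * (c * v / d) = c * v := Nat.mul_div_cancel' hdvd
    have hq0 : c * v / d ≠ 0 := by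
      intro h0
      rw [h0, Nat.mul_zero] at heq
      exact (by positivity : c * v ≠ 0) heq.symm
    have hfact : d.factorization 2 = a := by
      have hodd2 : (c * v / d).factorization 2 = 0 :=
        Nat.factorization_eq_zero_of_not_dvd (by rw [Nat.odd_iff] at hodd; omega)
      have hcv2 : (d * (c * v / d)).factorization 2 = a := by rw [heq]; exact hcv
      rw [Nat.factorization_mul hd0 hq0] at hcv2
      simp only [Finsupp.add_apply] at hcv2
      omega
    rw [hc, ← hfact]
    exact Nat.ordProj_dvd d 2
  -- the key identity for all odd v
  have hkey : ∀ v > 0, Odd v → ∑ e ∈ v.divisors, (B (c * e) : ℤ) = 2 ^ (c * v / 2) := by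
    intro v hv hvodd
    have hv0 : v ≠ 0 := hv.ne'
    have hm' : c * v = 2 * (c2 * v) := by rw [hc2]; ring
    have hm0' : c2 * v ≠ 0 := by
      have : c2 ≠ 0 := by rintro rfl; rw [Nat.mul_zero] at hc2; exact hc0 hc2
      positivity
    have hsum := sum_B hm' hm0'
    have hreidx : ∑ d ∈ (c * v).divisors.filter (fun d => Odd (c * v / d)), (B d : ℤ)
        = ∑ e ∈ v.divisors, (B (c * e) : ℤ) := by
      refine Finset.sum_nbij' (fun d => d / c) (fun e => c * e) ?_ ?_ ?_ ?_ ?_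
      · intro d hd
        obtain ⟨hd', hodd⟩ := Finset.mem_filter.mp hd
        obtain ⟨hdvd, -⟩ := Nat.mem_divisors.mp hd'
        obtain ⟨e', rfl⟩ := hcdvd v d hv0 hvodd hdvd hodd
        show c * e' / c ∈ v.divisors
        rw [Nat.mul_div_cancel_left _ (Nat.pos_of_ne_zero hc0)]
        refine Nat.mem_divisors.mpr ⟨?_, hv0⟩
        exact (Nat.mul_dvd_mul_iff_left (Nat.pos_of_ne_zero hc0)).mp hdvd
      · intro e he
        obtain ⟨hedvd, -⟩ := Nat.mem_divisors.mp he
        refine Finset.mem_filter.mpr ⟨Nat.mem_divisors.mpr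
          ⟨Nat.mul_dvd_mul_left c hedvd, by positivity⟩, ?_⟩
        rw [Nat.mul_div_mul_left _ _ (Nat.pos_of_ne_zero hc0)]
        exact odd_of_dvd hvodd (Nat.div_dvd_of_dvd hedvd)
      · intro d hd
        obtain ⟨hd', hodd⟩ := Finset.mem_filter.mp hd
        obtain ⟨hdvd, -⟩ := Nat.mem_divisors.mp hd'
        exact Nat.mul_div_cancel' (hcdvd v d hv0 hvodd hdvd hodd)
      · intro e he
        show c * e / c = e
        rw [Nat.mul_div_cancel_left _ (Nat.pos_of_ne_zero hc0)]
      · intro d hd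
        obtain ⟨hd', hodd⟩ := Finset.mem_filter.mp hd
        obtain ⟨hdvd, -⟩ := Nat.mem_divisors.mp hd'
        rw [Nat.mul_div_cancel' (hcdvd v d hv0 hvodd hdvd hodd)]
    rw [← hreidx]
    rw [← Nat.cast_sum, hsum]
    have : c * v / 2 = c2 * v := by rw [hm', Nat.mul_div_cancel_left _ (by norm_num)]
    rw [this]
    push_cast
    ring
  -- apply Möbius inversion on the set of odd numbers
  have hinv := (ArithmeticFunction.sum_eq_iff_sum_mul_moebius_eq_on (R := ℤ)
      (f := fun e => (B (c * e) : ℤ)) (g := fun v => (2 : ℤ) ^ (c * v / 2))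
      {v | Odd v} (fun x y hxy hy => odd_of_dvd hy hxy)).mp hkey u
      (Nat.pos_of_ne_zero hu0) huodd
  rw [hcu] at hinv
  rw [← hinv]
  refine (Nat.sum_divisorsAntidiagonal
    (fun x y => ((moebius x : ℤ) * 2 ^ (c * y / 2)))).trans ?_
  have hdivs : (n / 2).divisors.filter (fun e => Odd e) = u.divisors := by
    rw [half_odd_divisors hn h2, odd_divisors hn]
  rw [hdivs]
  refine Finset.sum_congr rfl fun e he => ?_
  obtain ⟨hedvd, -⟩ := Nat.mem_divisors.mp he
  congr 2
  rw [← Nat.mul_div_assoc c hedvd, hcu, Nat.div_div_eq_div_mul, Nat.div_div_eq_div_mul,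
    Nat.mul_comm]

/-! ### The combined identity -/

open ArithmeticFunction in
lemma AB_eq {n : ℕ} (hn : n ≠ 0) :
    ((A n : ℤ) + if 2 ∣ n then (B n : ℤ) else 0)
      = ∑ d ∈ n.divisors.filter (fun d => Odd d), (moebius d : ℤ) * 2 ^ (n / d) := by
  by_cases h2 : 2 ∣ n
  · rw [if_pos h2, moebius_A hn,
      ← Finset.sum_filter_add_sum_filter_not n.divisors (fun d => Odd d)
        (fun d => (moebius d : ℤ) * 2 ^ (n / d))]
    suffices h : (∑ d ∈ n.divisors.filter (fun d => ¬ Odd d),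
        (moebius d : ℤ) * 2 ^ (n / d)) = -(B n : ℤ) by rw [h]; ring
    have hre : ∑ d ∈ n.divisors.filter (fun d => ¬ Odd d), (moebius d : ℤ) * 2 ^ (n / d)
        = ∑ e ∈ (n / 2).divisors, (moebius (2 * e) : ℤ) * 2 ^ (n / 2 / e) := by
      refine Finset.sum_nbij' (fun d => d / 2) (fun e => 2 * e) ?_ ?_ ?_ ?_ ?_
      · intro d hd
        obtain ⟨hd', hodd⟩ := Finset.mem_filter.mp hd
        obtain ⟨hdvd, -⟩ := Nat.mem_divisors.mp hd'
        have h2d : 2 ∣ d := by rw [Nat.not_odd_iff_even, Nat.even_iff] at hodd; omega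
        obtain ⟨d2, rfl⟩ := h2d
        obtain ⟨k, hk⟩ := hdvd
        show 2 * d2 / 2 ∈ (n / 2).divisors
        rw [Nat.mul_div_cancel_left _ (by norm_num)]
        refine Nat.mem_divisors.mpr ⟨⟨k, ?_⟩, by omega⟩
        have e : 2 * d2 * k = 2 * (d2 * k) := by ring
        omega
      · intro e he
        obtain ⟨hedvd, -⟩ := Nat.mem_divisors.mp he
        refine Finset.mem_filter.mpr ⟨Nat.mem_divisors.mpr ⟨?_, hn⟩, ?_⟩
        · have : 2 * e ∣ 2 * (n / 2) := Nat.mul_dvd_mul_left 2 hedvd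
          rwa [Nat.mul_div_cancel' h2] at this
        · show ¬ Odd (2 * e)
          rw [Nat.not_odd_iff_even, Nat.even_iff]
          omega
      · intro d hd
        obtain ⟨hd', hodd⟩ := Finset.mem_filter.mp hd
        have h2d : 2 ∣ d := by rw [Nat.not_odd_iff_even, Nat.even_iff] at hodd; omega
        exact Nat.mul_div_cancel' h2d
      · intro e he
        show 2 * e / 2 = e
        rw [Nat.mul_div_cancel_left _ (by norm_num)]
      · intro d hd
        obtain ⟨hd', hodd⟩ := Finset.mem_filter.mp hd
        have h2d : 2 ∣ d := by rw [Nat.not_odd_iff_even, Nat.even_iff] at hodd; omega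
        obtain ⟨d2, rfl⟩ := h2d
        show (moebius (2 * d2) : ℤ) * 2 ^ (n / (2 * d2))
          = (moebius (2 * (2 * d2 / 2)) : ℤ) * 2 ^ (n / 2 / (2 * d2 / 2))
        rw [Nat.mul_div_cancel_left _ (by norm_num), Nat.div_div_eq_div_mul]
    rw [hre, ← Finset.sum_filter_add_sum_filter_not (n / 2).divisors (fun e => Odd e)
      (fun e => (moebius (2 * e) : ℤ) * 2 ^ (n / 2 / e))]
    have hzero : ∑ e ∈ (n / 2).divisors.filter (fun e => ¬ Odd e),
        (moebius (2 * e) : ℤ) * 2 ^ (n / 2 / e) = 0 := by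
      refine Finset.sum_eq_zero fun e he => ?_
      obtain ⟨-, hodd⟩ := Finset.mem_filter.mp he
      have h2e : 2 ∣ e := by rw [Nat.not_odd_iff_even, Nat.even_iff] at hodd; omega
      obtain ⟨f, rfl⟩ := h2e
      have hnsq : ¬ Squarefree (2 * (2 * f)) := by
        intro hsq
        have := hsq 2 ⟨f, by ring⟩
        rw [Nat.isUnit_iff] at this
        omega
      rw [moebius_eq_zero_of_not_squarefree hnsq]
      simp
    have hodds : ∑ e ∈ (n / 2).divisors.filter (fun e => Odd e),
        (moebius (2 * e) : ℤ) * 2 ^ (n / 2 / e) = -(B n : ℤ) := by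
      rw [moebius_B hn h2, ← Finset.sum_neg_distrib]
      refine Finset.sum_congr rfl fun e he => ?_
      obtain ⟨-, hodd⟩ := Finset.mem_filter.mp he
      have hcop : Nat.Coprime 2 e := Nat.coprime_two_left.mpr hodd
      rw [isMultiplicative_moebius.map_mul_of_coprime hcop,
        moebius_apply_prime Nat.prime_two]
      push_cast
      ring
    rw [hzero, hodds]
    ring
  · rw [if_neg h2, add_zero, moebius_A hn]
    rw [Finset.filter_true_of_mem fun d hd =>
      odd_of_dvd (Nat.odd_iff.mpr (by omega)) (Nat.dvd_of_mem_divisors hd)]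

/-! ### The group action -/

section Action

variable (n : ℕ) [NeZero n]

abbrev Ap := {w : Fin n → Fin 2 // ∀ l : Fin n, (∀ i : Fin n, w (i + l) = w i) → l = 0}

def flipRot (p : Fin n × Fin 2) (w : Fin n → Fin 2) : Fin n → Fin 2 :=
  fun i => p.2 + w (i + p.1)

lemma flipRot_aperiodic (p : Fin n × Fin 2) (w : Fin n → Fin 2)
    (hw : ∀ l : Fin n, (∀ i : Fin n, w (i + l) = w i) → l = 0) :
    ∀ l : Fin n, (∀ i : Fin n, flipRot n p w (i + l) = flipRot n p w i) → l = 0 := by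
  intro l h
  apply hw l
  intro i
  have h' : w (i - p.1 + l + p.1) = w (i - p.1 + p.1) := by
    have := h (i - p.1)
    simp only [flipRot] at this
    exact add_left_cancel this
  rwa [add_right_comm, sub_add_cancel] at h'

instance : SMul (Multiplicative (Fin n × Fin 2)) (Ap n) :=
  ⟨fun g w => ⟨flipRot n g.toAdd w.1, flipRot_aperiodic n g.toAdd w.1 w.2⟩⟩

lemma smul_val (g : Multiplicative (Fin n × Fin 2)) (w : Ap n) :
    (g • w).1 = flipRot n g.toAdd w.1 := rfl

instance : MulAction (Multiplicative (Fin n × Fin 2)) (Ap n) where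
  one_smul w := by
    refine Subtype.ext (funext fun i => ?_)
    show (0 : Fin 2) + w.1 (i + 0) = w.1 i
    rw [add_zero, zero_add]
  mul_smul g h w := by
    refine Subtype.ext (funext fun i => ?_)
    show (g.toAdd.2 + h.toAdd.2) + w.1 (i + (g.toAdd.1 + h.toAdd.1))
      = g.toAdd.2 + (h.toAdd.2 + w.1 (i + g.toAdd.1 + h.toAdd.1))
    rw [add_assoc, ← add_assoc i]

end Action

/-! ### Fixed point counts -/

section Fixed

variable (n : ℕ) [NeZero n]

open MulAction

lemma mem_fixedBy_iff (p : Fin n × Fin 2) (w : Ap n) :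
    w ∈ fixedBy (Ap n) (Multiplicative.ofAdd p) ↔
      ∀ i, p.2 + w.1 (i + p.1) = w.1 i := by
  rw [MulAction.mem_fixedBy]
  constructor
  · intro h i
    exact congrFun (congrArg Subtype.val h) i
  · intro h
    exact Subtype.ext (funext h)

lemma card_fixedBy_rot_zero :
    Nat.card (fixedBy (Ap n) (Multiplicative.ofAdd ((0 : Fin n), (0 : Fin 2)))) = A n := by
  have h1 : ∀ w : Ap n, w ∈ fixedBy (Ap n) (Multiplicative.ofAdd ((0 : Fin n), (0 : Fin 2))) := by
    intro w
    rw [mem_fixedBy_iff]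
    intro i
    show (0 : Fin 2) + w.1 (i + 0) = w.1 i
    rw [add_zero, zero_add]
  have e : (fixedBy (Ap n) (Multiplicative.ofAdd ((0 : Fin n), (0 : Fin 2)))) ≃ Ap n :=
    (Equiv.subtypeUnivEquiv h1)
  rw [Nat.card_congr e, A]
  exact Nat.card_congr (Equiv.subtypeEquivRight fun w => aperiodic_iff w)

lemma card_fixedBy_rot (l : Fin n) (hl : l ≠ 0) :
    Nat.card (fixedBy (Ap n) (Multiplicative.ofAdd (l, (0 : Fin 2)))) = 0 := by
  have : IsEmpty (fixedBy (Ap n) (Multiplicative.ofAdd (l, (0 : Fin 2)))) := by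
    refine ⟨fun x => ?_⟩
    have hx := (mem_fixedBy_iff n (l, 0) x.1).mp x.2
    refine hl (x.1.2 l fun i => ?_)
    have := hx i
    rwa [zero_add] at this
  exact Nat.card_of_isEmpty

lemma card_fixedBy_flip (l : Fin n) (hl : 2 * l.val ≠ n) :
    Nat.card (fixedBy (Ap n) (Multiplicative.ofAdd (l, (1 : Fin 2)))) = 0 := by
  have hn : n ≠ 0 := NeZero.ne n
  have : IsEmpty (fixedBy (Ap n) (Multiplicative.ofAdd (l, (1 : Fin 2)))) := by
    refine ⟨fun x => ?_⟩
    have hx := (mem_fixedBy_iff n (l, 1) x.1).mp x.2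
    have hanti : isAnti (W x.1.1) l.val := by
      refine (anti_iff hn x.1.1 l).mp fun i => ?_
      have := hx i
      have fin2 : ∀ a b : Fin 2, 1 + a = b → a = b + 1 := by decide
      exact fin2 _ _ this
    have hmp : mp (W x.1.1) = n := (aperiodic_iff x.1.1).mp x.1.2
    have h2 := anti_mp (exists_pos_per hn x.1.1) hanti
    rw [hmp] at h2
    rw [Nat.mod_eq_of_lt l.isLt] at h2
    exact hl h2
  exact Nat.card_of_isEmpty

lemma card_fixedBy_flip_half (l : Fin n) (hl : 2 * l.val = n) :
    Nat.card (fixedBy (Ap n) (Multiplicative.ofAdd (l, (1 : Fin 2)))) = B n := by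
  have hn : n ≠ 0 := NeZero.ne n
  have hlv : l.val = n / 2 := by omega
  have fin2 : ∀ a b : Fin 2, (1 + a = b) ↔ (a = b + 1) := by decide
  have e1 : (fixedBy (Ap n) (Multiplicative.ofAdd (l, (1 : Fin 2)))) ≃
      {w : Ap n // isAnti (W w.1) (n / 2)} := by
    refine Equiv.subtypeEquivRight fun w => ?_
    rw [mem_fixedBy_iff]
    constructor
    · intro h
      rw [← hlv]
      exact (anti_iff hn w.1 l).mp fun i => (fin2 _ _).mp (h i)
    · intro h i
      rw [← hlv] at h
      exact (fin2 _ _).mpr ((anti_iff hn w.1 l).mpr h i)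
  have e2 : {w : Ap n // isAnti (W w.1) (n / 2)} ≃
      {w : Fin n → Fin 2 //
        (∀ l : Fin n, (∀ i : Fin n, w (i + l) = w i) → l = 0) ∧ isAnti (W w) (n / 2)} :=
    Equiv.subtypeSubtypeEquivSubtypeInter
      (fun w : Fin n → Fin 2 => ∀ l : Fin n, (∀ i : Fin n, w (i + l) = w i) → l = 0)
      (fun w => isAnti (W w) (n / 2))
  have e3 : {w : Fin n → Fin 2 //
        (∀ l : Fin n, (∀ i : Fin n, w (i + l) = w i) → l = 0) ∧ isAnti (W w) (n / 2)} ≃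
      {w : Fin n → Fin 2 // mp (W w) = n ∧ isAnti (W w) (n / 2)} :=
    Equiv.subtypeEquivRight fun w => and_congr_left fun _ => aperiodic_iff w
  rw [Nat.card_congr ((e1.trans e2).trans e3)]
  rfl

end Fixed

/-! ### Burnside sum -/

open MulAction in
lemma burnside_sum (n : ℕ) [NeZero n] :
    (∑ g : Multiplicative (Fin n × Fin 2), Nat.card (fixedBy (Ap n) g))
      = A n + (if 2 ∣ n then B n else 0) := by
  classical
  have h1 : ∑ g : Multiplicative (Fin n × Fin 2), Nat.card (fixedBy (Ap n) g)
      = ∑ p : Fin n × Fin 2, Nat.card (fixedBy (Ap n) (Multiplicative.ofAdd p)) :=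
    (Fintype.sum_equiv Multiplicative.ofAdd _ _ fun p => rfl).symm
  rw [h1, Fintype.sum_prod_type]
  simp only [Fin.sum_univ_two]
  rw [Finset.sum_add_distrib]
  have hA : ∑ l : Fin n, Nat.card (fixedBy (Ap n) (Multiplicative.ofAdd (l, (0 : Fin 2))))
      = A n := by
    rw [Finset.sum_eq_single_of_mem 0 (Finset.mem_univ _)
      (fun l _ hl => card_fixedBy_rot n l hl)]
    exact card_fixedBy_rot_zero n
  have hB : ∑ l : Fin n, Nat.card (fixedBy (Ap n) (Multiplicative.ofAdd (l, (1 : Fin 2))))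
      = if 2 ∣ n then B n else 0 := by
    by_cases h2n : 2 ∣ n
    · rw [if_pos h2n]
      have hpos := Nat.pos_of_ne_zero (NeZero.ne n)
      have hlt : n / 2 < n := by omega
      rw [Finset.sum_eq_single_of_mem ⟨n / 2, hlt⟩ (Finset.mem_univ _) ?_]
      · exact card_fixedBy_flip_half n _ (by show 2 * (n / 2) = n; omega)
      · intro l _ hl
        refine card_fixedBy_flip n l fun hc => hl (Fin.ext ?_)
        show l.val = n / 2
        omega
    · rw [if_neg h2n]
      exact Finset.sum_eq_zero fun l _ =>
        card_fixedBy_flip n l fun hc => h2n ⟨l.val, hc.symm⟩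
  rw [hA, hB]

end PLN

open Finset

theorem permuted_lyndon_necklace_count_binary (n : ℕ) [NeZero n] :
    (2 * n : ℤ) * Nat.card (Quot (fun w₁ w₂ :
        {w : Fin n → Fin 2 // ∀ l : Fin n, (∀ i : Fin n, w (i + l) = w i) → l = 0} =>
        ∃ l : Fin n, w₁.val = (fun i => w₂.val (i + l)) ∨
          w₁.val = fun i => 1 - w₂.val (i + l)))
      = ∑ d ∈ n.divisors.filter (fun d => Odd d),
          (ArithmeticFunction.moebius d) * (2 : ℤ) ^ (n / d) := by
  classical
  have hn : n ≠ 0 := NeZero.ne n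
  set G := Multiplicative (Fin n × Fin 2) with hG
  letI : ∀ g : G, Fintype (MulAction.fixedBy (PLN.Ap n) g) := fun g => Fintype.ofFinite _
  letI : Fintype (Quotient (MulAction.orbitRel G (PLN.Ap n))) := Fintype.ofFinite _
  have hburn := MulAction.sum_card_fixedBy_eq_card_orbits_mul_card_group G (PLN.Ap n)
  simp only [← Nat.card_eq_fintype_card] at hburn
  rw [PLN.burnside_sum n] at hburn
  have hcardG : Nat.card G = 2 * n := by
    rw [hG, Nat.card_congr Multiplicative.toAdd, Nat.card_prod]
    simp [Nat.card_eq_fintype_card]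
    ring
  rw [hcardG] at hburn
  -- identify the quotients
  have fin2sub : ∀ x : Fin 2, 1 + x = 1 - x := by decide
  have fin2cases : ∀ x : Fin 2, x = 0 ∨ x = 1 := by decide
  have hiff : ∀ a b : PLN.Ap n,
      (∃ l : Fin n, a.val = (fun i => b.val (i + l)) ∨
        a.val = fun i => 1 - b.val (i + l)) ↔
      (MulAction.orbitRel G (PLN.Ap n)).r a b := by
    intro a b
    constructor
    · rintro ⟨l, h | h⟩
      · refine MulAction.mem_orbit_iff.mpr ⟨Multiplicative.ofAdd (l, (0 : Fin 2)), ?_⟩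
        refine Subtype.ext (funext fun i => ?_)
        show (0 : Fin 2) + b.1 (i + l) = a.1 i
        rw [zero_add, h]
      · refine MulAction.mem_orbit_iff.mpr ⟨Multiplicative.ofAdd (l, (1 : Fin 2)), ?_⟩
        refine Subtype.ext (funext fun i => ?_)
        show (1 : Fin 2) + b.1 (i + l) = a.1 i
        rw [h]
        exact fin2sub _
    · intro hab
      obtain ⟨g, hg⟩ := MulAction.mem_orbit_iff.mp hab
      have hval : a.1 = fun i => g.toAdd.2 + b.1 (i + g.toAdd.1) := by
        rw [← hg]; rfl
      refine ⟨g.toAdd.1, ?_⟩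
      rcases fin2cases g.toAdd.2 with h0 | h1
      · refine Or.inl ?_
        rw [hval, h0]
        funext i
        rw [zero_add]
      · refine Or.inr ?_
        rw [hval, h1]
        funext i
        exact fin2sub _
  have hquot := Nat.card_congr (Quot.congrRight hiff)
  rw [hquot]
  rw [← PLN.AB_eq hn]
  have hburn' : (PLN.A n + if 2 ∣ n then PLN.B n else 0)
      = Nat.card (Quot ⇑(MulAction.orbitRel G (PLN.Ap n))) * (2 * n) := hburn
  have hcast : ((PLN.A n : ℤ) + if 2 ∣ n then (PLN.B n : ℤ) else 0)
      = ((PLN.A n + if 2 ∣ n then PLN.B n else 0 : ℕ) : ℤ) := by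
    push_cast [apply_ite (Nat.cast : ℕ → ℤ)]
    ring
  rw [hcast, hburn']
  push_cast
  ring
end

section
/- For binary words of length n and any l, the composition πsr^l of the letter-flip π with the reflection sr^l fixes no word when n is odd; when n is even, πsr^l fixes a word only if l is even, in which case it fixes exactly 2^{n/2} words. Consequently the total number of (word, operation) fixed pairs over all n operations of the form πsr^l is (n/2)·2^{n/2} for n even and 0 for n odd. -/
/-!
The word `w` is fixed by `πsr^l` iff `w (r i) = 1 - w i` for the position involution `r` of
`sr^l`. If `r` fixes a position, the letter there would equal its own flip, so no word is fixed.
Otherwise the positions split into `n / 2` transposed pairs and `w` may be chosen freely on one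
position of each pair. Finally `r` fixes `i` iff `2 i ≡ -(l + 1) (mod n)`, which is solvable
exactly when `n` or `l` is odd.
-/

open Finset
open Fin.NatCast

section TwistedInvariants

variable {α β : Type*} {r : α → α} {σ : β → β}

theorem isEmpty_twisted_invariant_of_isFixedPt {a : α} (ha : Function.IsFixedPt r a)
    (hσ : ∀ b, σ b ≠ b) :
    IsEmpty {w : α → β // ∀ i, w i = σ (w (r i))} :=
  ⟨fun ⟨w, hw⟩ => hσ (w a) (by rw [← congrArg w ha, ← hw a, ha])⟩

variable [LinearOrder α]

/-- `{i | i < r i}` is a fundamental domain of the fixed-point-free involution `r`. -/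
def twistedInvariantEquiv (hr : Function.Involutive r) (hfix : ∀ i, r i ≠ i)
    (hσ : Function.Involutive σ) :
    {w : α → β // ∀ i, w i = σ (w (r i))} ≃ ({i // i < r i} → β) where
  toFun w i := w.1 i
  invFun f := ⟨fun i => if h : i < r i then f ⟨i, h⟩
      else σ (f ⟨r i, by rw [hr i]; exact lt_of_le_of_ne (not_lt.1 h) (hfix i)⟩), by
    intro i
    by_cases h : i < r i
    · have h' : ¬ r i < r (r i) := by rw [hr i]; exact h.not_gt
      simp only [h, h', dif_pos, dif_neg, not_false_eq_true, hσ (f _)]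
      congr
      exact (hr i).symm
    · have h' : r i < r (r i) := by rw [hr i]; exact lt_of_le_of_ne (not_lt.1 h) (hfix i)
      simp only [h, h', dif_pos, dif_neg, not_false_eq_true]⟩
  left_inv w := by
    ext i
    dsimp only
    split_ifs with h
    · rfl
    · exact (w.2 i).symm
  right_inv f := by
    ext i
    simp [i.2]

theorem card_subtype_lt_apply_eq_half [Fintype α] (hr : Function.Involutive r)
    (hfix : ∀ i, r i ≠ i) :
    Fintype.card {i // i < r i} = Fintype.card α / 2 := by
  have e : {i // i < r i} ≃ {i // ¬ i < r i} :=
    (hr.toPerm r).subtypeEquiv fun i => by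
      simp only [Function.Involutive.coe_toPerm, hr i, not_lt]
      exact ⟨le_of_lt, fun h => lt_of_le_of_ne h (hfix i).symm⟩
  have hcompl := Fintype.card_subtype_compl (fun i => i < r i)
  have hle := Fintype.card_subtype_le (fun i => i < r i)
  rw [← Fintype.card_congr e] at hcompl
  omega

theorem card_twisted_invariant [Fintype α] (hr : Function.Involutive r)
    (hfix : ∀ i, r i ≠ i) (hσ : Function.Involutive σ) :
    Nat.card {w : α → β // ∀ i, w i = σ (w (r i))} =
      Nat.card β ^ (Fintype.card α / 2) := by
  rw [Nat.card_congr (twistedInvariantEquiv hr hfix hσ), Nat.card_fun,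
    Nat.card_eq_fintype_card (α := {i // i < r i}), card_subtype_lt_apply_eq_half hr hfix]

end TwistedInvariants

theorem card_filter_even_range_two_mul (m : ℕ) : #{l ∈ range (2 * m) | Even l} = m := by
  induction m with
  | zero => rfl
  | succ m ih =>
    rw [Nat.mul_succ, range_add_one, filter_insert, range_add_one, filter_insert,
      if_neg (by simp), if_pos (even_two_mul m),
      card_insert_of_notMem (by simp), ih]

namespace Fin

variable {n : ℕ} [NeZero n]

/-- The position map of `sr^l`, `i ↦ n - l - i + 1` on `1, …, n`, read on `0, …, n - 1`. -/
def reflection (l i : Fin n) : Fin n := -(i + l + 1)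

theorem reflection_involutive (l : Fin n) : Function.Involutive (reflection l) := by
  intro i
  simp only [reflection]
  abel

theorem reflection_neg_eq_self_of_add_self_eq {l c : Fin n} (h : c + c = l + 1) :
    reflection l (-c) = -c := by
  rw [reflection, add_assoc, ← h]
  abel

open Fin.CommRing in
theorem exists_add_self_eq_of_odd (hn : Odd n) (x : Fin n) : ∃ c : Fin n, c + c = x := by
  obtain ⟨m, rfl⟩ := hn
  refine ⟨(m + 1 : ℕ) * x, ?_⟩
  have : ((2 * m + 1 : ℕ) : Fin (2 * m + 1)) = 0 := natCast_self _
  push_cast at this ⊢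
  linear_combination x * this

theorem exists_add_self_eq_succ_of_odd_val {l : Fin n} (hl : Odd l.val) :
    ∃ c : Fin n, c + c = l + 1 := by
  obtain ⟨m, hm⟩ := hl
  refine ⟨(m + 1 : ℕ), ?_⟩
  rw [← Nat.cast_add, ← cast_val_eq_self l, hm, ← Nat.cast_add_one]
  congr 1
  ring

theorem reflection_ne_self {l : Fin n} (hn : Even n) (hl : Even l.val) (i : Fin n) :
    reflection l i ≠ i := by
  intro h
  rw [reflection, neg_eq_iff_add_eq_zero] at h
  have hzero : ((i.val + i.val + l.val + 1 : ℕ) : Fin n) = 0 := by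
    simp only [Nat.cast_add, cast_val_eq_self, Nat.cast_one]
    rw [← h]
    abel
  have hdvd : 2 ∣ i.val + i.val + l.val + 1 :=
    (even_iff_two_dvd.1 hn).trans (natCast_eq_zero.1 hzero)
  obtain ⟨k, hk⟩ := hl
  omega

theorem card_flip_reflection_fixed_eq_zero {l : Fin n} (h : ∃ c : Fin n, c + c = l + 1) :
    Nat.card {w : Fin n → Fin 2 // ∀ i, w i = 1 - w (reflection l i)} = 0 := by
  obtain ⟨c, hc⟩ := h
  have := isEmpty_twisted_invariant_of_isFixedPt (reflection_neg_eq_self_of_add_self_eq hc)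
    (σ := fun a : Fin 2 => 1 - a) (by decide)
  exact Nat.card_of_isEmpty

theorem card_flip_reflection_fixed_eq_pow {l : Fin n} (hn : Even n) (hl : Even l.val) :
    Nat.card {w : Fin n → Fin 2 // ∀ i, w i = 1 - w (reflection l i)} = 2 ^ (n / 2) := by
  rw [card_twisted_invariant (reflection_involutive l) (reflection_ne_self hn hl)
      (by decide : ∀ a : Fin 2, 1 - (1 - a) = a),
    Nat.card_fin, Fintype.card_fin]

end Fin

theorem flip_reflection_fixed_words_binary (n : ℕ) [NeZero n] :
    (∀ l : Fin n, ¬ Even n →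
      Nat.card {w : Fin n → Fin 2 // ∀ i : Fin n, w i = 1 - w (-(i + l + 1))} = 0) ∧
    (∀ l : Fin n, Even n → Odd l.val →
      Nat.card {w : Fin n → Fin 2 // ∀ i : Fin n, w i = 1 - w (-(i + l + 1))} = 0) ∧
    (∀ l : Fin n, Even n → Even l.val →
      Nat.card {w : Fin n → Fin 2 // ∀ i : Fin n, w i = 1 - w (-(i + l + 1))} =
        2 ^ (n / 2)) ∧
    (Even n →
      ∑ l ∈ Finset.range n,
          Nat.card {w : Fin n → Fin 2 // ∀ i : Fin n,
            w i = 1 - w (-(i + (l : Fin n) + 1))}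
        = (n / 2) * 2 ^ (n / 2)) ∧
    (¬ Even n →
      ∑ l ∈ Finset.range n,
          Nat.card {w : Fin n → Fin 2 // ∀ i : Fin n,
            w i = 1 - w (-(i + (l : Fin n) + 1))}
        = 0) := by
  have card_of_odd_n (l : Fin n) (hn : ¬ Even n) := Fin.card_flip_reflection_fixed_eq_zero
    (Fin.exists_add_self_eq_of_odd (Nat.not_even_iff_odd.1 hn) (l + 1))
  have card_of_odd_l (l : Fin n) (hl : Odd l.val) := Fin.card_flip_reflection_fixed_eq_zero
    (Fin.exists_add_self_eq_succ_of_odd_val hl)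
  refine ⟨card_of_odd_n, fun l _ => card_of_odd_l l,
    fun l hn => Fin.card_flip_reflection_fixed_eq_pow hn,
    fun hn => ?_, fun hn => sum_eq_zero fun l _ => card_of_odd_n l hn⟩
  obtain ⟨m, rfl⟩ := hn
  calc ∑ l ∈ range (m + m), Nat.card {w : Fin (m + m) → Fin 2 // ∀ i : Fin (m + m),
          w i = 1 - w (-(i + (l : Fin (m + m)) + 1))}
      = ∑ l ∈ range (m + m), if Even l then 2 ^ ((m + m) / 2) else 0 := by
        refine sum_congr rfl fun l hl => ?_
        have hval : (l : Fin (m + m)).val = l := Fin.val_cast_of_lt (mem_range.1 hl)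
        split_ifs with he
        · exact Fin.card_flip_reflection_fixed_eq_pow ⟨m, rfl⟩ (by rwa [hval])
        · exact card_of_odd_l _ (by rwa [hval, ← Nat.not_even_iff_odd])
    _ = (m + m) / 2 * 2 ^ ((m + m) / 2) := by
        rw [sum_ite, sum_const_zero, add_zero, Finset.sum_const, smul_eq_mul, ← two_mul,
          card_filter_even_range_two_mul, Nat.mul_div_cancel_left m two_pos]
end
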